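/- arXiv:2201.12719 — 7 statements merged into one kernel-verified Lean document; each statement's English description precedes it below -/
import Mathlib

section
/- Under Assumptions 1 and 2 with μ > 0, if Local SGD is run with stepsize η = 1/L, then for every T = RK the averaged iterate satisfies E‖x̄^{(T)} − x*‖² ≤ (1 − μ/L)^T · ‖x^{(0)} − x*‖², where x* is the minimizer of f. -/
open MeasureTheory ProbabilityTheory
open scoped RealInnerProductSpace

/-!
Under interpolation every sample gradient vanishes at `x*`, so every local step
`x ↦ x - (1/L) ∇F(x, ξ)` is, for every sample `ξ`, a contraction of the squared distance to `x*`
by the factor `1 - μ/L`: strong convexity between `x` and `x*` gives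
`⟪∇F(x, ξ), x - x*⟫ ≥ F(x, ξ) - F(x*, ξ) + μ/2 ‖x - x*‖²`, and the descent lemma gives
`‖∇F(x, ξ)‖² ≤ 2L (F(x, ξ) - F(x*, ξ))`. Averaging cannot increase the mean squared distance
of the local iterates to `x*` (Jensen), so this mean decays like `(1 - μ/L)^t` along every
sample path, and it dominates the squared distance of the averaged iterate.
-/

section GradientStep

variable {E : Type*} [NormedAddCommGroup E] [InnerProductSpace ℝ E] [CompleteSpace E]
  {f : E → ℝ} {g : E → E} {L μ : ℝ}

theorem le_add_inner_add_sq_of_lipschitz_gradient (hgrad : ∀ x, HasGradientAt f (g x) x)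
    (hlip : ∀ x y, ‖g x - g y‖ ≤ L * ‖x - y‖) (a b : E) :
    f b ≤ f a + ⟪g a, b - a⟫ + L / 2 * ‖b - a‖ ^ 2 := by
  set v := b - a
  -- the gap between `f` and its quadratic model along the ray from `a` through `b` is antitone
  set ψ : ℝ → ℝ := fun t => f (a + t • v) - t * ⟪g a, v⟫ - t ^ 2 * (L / 2 * ‖v‖ ^ 2)
  have hψ : ∀ t, HasDerivAt ψ (⟪g (a + t • v) - g a, v⟫ - t * (L * ‖v‖ ^ 2)) t := by
    intro t
    have hline : HasDerivAt (fun t : ℝ => a + t • v) v t := by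
      simpa using ((hasDerivAt_id t).smul_const v).const_add a
    have hf := (hgrad (a + t • v)).hasFDerivAt.comp_hasDerivAt t hline
    simp only [InnerProductSpace.toDual_apply_apply] at hf
    refine ((hf.sub ((hasDerivAt_id t).mul_const ⟪g a, v⟫)).sub
      ((hasDerivAt_pow 2 t).mul_const (L / 2 * ‖v‖ ^ 2))).congr_deriv ?_
    rw [inner_sub_left]
    norm_num
    ring
  have hψ_nonpos : ∀ t ∈ interior (Set.Ici (0 : ℝ)),
      ⟪g (a + t • v) - g a, v⟫ - t * (L * ‖v‖ ^ 2) ≤ 0 := by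
    intro t ht
    rw [interior_Ici, Set.mem_Ioi] at ht
    have hg : ‖g (a + t • v) - g a‖ ≤ L * (t * ‖v‖) := by
      simpa [norm_smul, abs_of_pos ht] using hlip (a + t • v) a
    nlinarith [real_inner_le_norm (g (a + t • v) - g a) v,
      mul_le_mul_of_nonneg_right hg (norm_nonneg v)]
  have hanti := antitoneOn_of_hasDerivWithinAt_nonpos (convex_Ici 0)
    (fun t _ => (hψ t).continuousAt.continuousWithinAt)
    (fun t _ => (hψ t).hasDerivWithinAt) hψ_nonpos
  have h01 := hanti Set.self_mem_Ici (Set.mem_Ici.2 zero_le_one) zero_le_one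
  simp [ψ, v] at h01
  linarith

theorem le_of_strongConvex_of_lipschitz_gradient [Nontrivial E]
    (hgrad : ∀ x, HasGradientAt f (g x) x) (hlip : ∀ x y, ‖g x - g y‖ ≤ L * ‖x - y‖)
    (hsc : ∀ x y, f y + ⟪g y, x - y⟫ + μ / 2 * ‖x - y‖ ^ 2 ≤ f x) : μ ≤ L := by
  obtain ⟨a, b, hab⟩ := exists_pair_ne E
  have hpos : 0 < ‖b - a‖ ^ 2 := by positivity [sub_ne_zero.2 hab.symm]
  nlinarith [hsc b a, le_add_inner_add_sq_of_lipschitz_gradient hgrad hlip a b]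

theorem sq_norm_gradient_le_sub_min (hL : 0 < L) (hgrad : ∀ x, HasGradientAt f (g x) x)
    (hlip : ∀ x y, ‖g x - g y‖ ≤ L * ‖x - y‖) {xs : E} (hmin : ∀ y, f xs ≤ f y) (x : E) :
    ‖g x‖ ^ 2 ≤ 2 * L * (f x - f xs) := by
  have hdesc := le_add_inner_add_sq_of_lipschitz_gradient hgrad hlip x (x - L⁻¹ • g x)
  simp only [sub_sub_cancel_left, inner_neg_right, real_inner_smul_right, norm_neg,
    norm_smul, real_inner_self_eq_norm_sq, Real.norm_eq_abs, abs_of_pos (inv_pos.2 hL)]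
    at hdesc
  have hgap : f xs ≤ f x - ‖g x‖ ^ 2 / (2 * L) :=
    calc f xs ≤ f (x - L⁻¹ • g x) := hmin _
      _ ≤ _ := hdesc
      _ = _ := by field_simp; ring
  rw [le_sub_comm, div_le_iff₀ (by positivity)] at hgap
  linarith

theorem sq_norm_sub_smul_gradient_sub_le (hL : 0 < L) (hμ : 0 ≤ μ)
    (hgrad : ∀ x, HasGradientAt f (g x) x) (hlip : ∀ x y, ‖g x - g y‖ ≤ L * ‖x - y‖)
    (hsc : ∀ x y, f y + ⟪g y, x - y⟫ + μ / 2 * ‖x - y‖ ^ 2 ≤ f x) {xs : E} (hxs : g xs = 0)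
    (x : E) : ‖x - (1 / L) • g x - xs‖ ^ 2 ≤ (1 - μ / L) * ‖x - xs‖ ^ 2 := by
  have hmin : ∀ y, f xs ≤ f y := fun y => by
    nlinarith [hsc y xs, hxs ▸ inner_zero_left (𝕜 := ℝ) (y - xs), sq_nonneg ‖y - xs‖]
  have hgap : ‖g x‖ ^ 2 / L ^ 2 ≤ 2 / L * (f x - f xs) := by
    rw [div_le_iff₀ (by positivity), show 2 / L * (f x - f xs) * L ^ 2 = 2 * L * (f x - f xs) by
      field_simp]
    exact sq_norm_gradient_le_sub_min hL hgrad hlip hmin x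
  have hsc' := mul_le_mul_of_nonneg_left (hsc xs x) (by positivity : 0 ≤ 2 / L)
  rw [norm_sub_rev, ← neg_sub x xs, inner_neg_right] at hsc'
  have hexpand : ‖x - (1 / L) • g x - xs‖ ^ 2
      = ‖x - xs‖ ^ 2 - 2 / L * ⟪g x, x - xs⟫ + ‖g x‖ ^ 2 / L ^ 2 := by
    rw [sub_right_comm, norm_sub_sq_real, real_inner_smul_right, norm_smul, real_inner_comm,
      Real.norm_eq_abs, abs_of_pos (one_div_pos.2 hL)]
    ring
  rw [hexpand]
  linear_combination hgap + hsc'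

end GradientStep

section LocalSGD

variable {E : Type*} [NormedAddCommGroup E] {n : ℕ}

noncomputable def meanSqDist (x : Fin n → E) (p : E) : ℝ :=
  (n : ℝ)⁻¹ * ∑ i, ‖x i - p‖ ^ 2

theorem meanSqDist_const (hn : 0 < n) (x p : E) :
    meanSqDist (fun _ : Fin n => x) p = ‖x - p‖ ^ 2 := by
  simp [meanSqDist, hn.ne']

theorem meanSqDist_le_mul (q : ℝ) {x y : Fin n → E} {p : E}
    (h : ∀ i, ‖y i - p‖ ^ 2 ≤ q * ‖x i - p‖ ^ 2) : meanSqDist y p ≤ q * meanSqDist x p := by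
  unfold meanSqDist
  rw [mul_left_comm, Finset.mul_sum _ _ q]
  gcongr with i
  exact h i

theorem sq_norm_average_sub_le_meanSqDist [NormedSpace ℝ E] (hn : 0 < n) (x : Fin n → E)
    (p : E) :
    ‖(n : ℝ)⁻¹ • ∑ i, x i - p‖ ^ 2 ≤ meanSqDist x p := by
  have hconv : ConvexOn ℝ Set.univ fun v : E => ‖v - p‖ ^ 2 := by
    have := ((convexOn_norm convex_univ).pow (fun _ _ => norm_nonneg _) 2).translate_right (-p)
    simpa [Function.comp_def, neg_add_eq_sub] using this
  have hn' : (n : ℝ) ≠ 0 := by positivity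
  simpa [meanSqDist, Finset.mul_sum, Finset.smul_sum, hn'] using
    hconv.map_sum_le (t := Finset.univ) (w := fun _ => (n : ℝ)⁻¹) (p := x) (by simp)
      (by simp [hn']) (by simp)

theorem meanSqDist_localSGD_le [NormedSpace ℝ E] (hn : 0 < n) {q : ℝ} (hq : 0 ≤ q) {p x₀ : E}
    (step : ℕ → Fin n → E → E) (hstep : ∀ t i x, ‖step t i x - p‖ ^ 2 ≤ q * ‖x - p‖ ^ 2)
    (sync : ℕ → Prop) [DecidablePred sync] (X : ℕ → Fin n → E) (hX₀ : ∀ i, X 0 i = x₀)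
    (hX : ∀ t i, X (t + 1) i =
      if sync (t + 1) then (n : ℝ)⁻¹ • ∑ j, step t j (X t j) else step t i (X t i))
    (t : ℕ) : meanSqDist (X t) p ≤ q ^ t * ‖x₀ - p‖ ^ 2 := by
  induction t with
  | zero => simp [funext hX₀, meanSqDist_const hn]
  | succ t ih =>
    have hsync : meanSqDist (X (t + 1)) p ≤ meanSqDist (fun i => step t i (X t i)) p := by
      by_cases h : sync (t + 1)
      · have hX' : X (t + 1) = fun _ => (n : ℝ)⁻¹ • ∑ j, step t j (X t j) :=
          funext fun i => by rw [hX, if_pos h]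
        rw [hX', meanSqDist_const hn]
        exact sq_norm_average_sub_le_meanSqDist hn _ p
      · have hX' : X (t + 1) = fun i => step t i (X t i) := funext fun i => by rw [hX, if_neg h]
        rw [hX']
    calc meanSqDist (X (t + 1)) p
        ≤ q * meanSqDist (X t) p := hsync.trans (meanSqDist_le_mul q fun i => hstep t i (X t i))
      _ ≤ q * (q ^ t * ‖x₀ - p‖ ^ 2) := by gcongr
      _ = q ^ (t + 1) * ‖x₀ - p‖ ^ 2 := by ring

end LocalSGD

theorem local_sgd_strongly_convex_general
    {d n : ℕ} (hn : 0 < n)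
    {Ω S : Type*} [MeasurableSpace Ω] [MeasurableSpace S]
    -- underlying probability space
    (P : Measure Ω) [IsProbabilityMeasure P]
    -- local sample distributions
    (D : Fin n → Measure S) (hD : ∀ i, IsProbabilityMeasure (D i))
    -- sample loss functions and their (stochastic) gradients
    (F : Fin n → EuclideanSpace ℝ (Fin d) → S → ℝ)
    (g : Fin n → EuclideanSpace ℝ (Fin d) → S → EuclideanSpace ℝ (Fin d))
    (L μ : ℝ) (hL : 0 < L) (hμ : 0 < μ)
    -- g i x s is the gradient of the sample loss F i · s at x
    (hgrad : ∀ i s x, HasGradientAt (fun y => F i y s) (g i x s) x)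
    -- each sample loss is L-smooth
    (hsmooth : ∀ i s x y, ‖g i x s - g i y s‖ ≤ L * ‖x - y‖)
    -- Assumption 1: μ-strong convexity of each sample loss
    (hsc : ∀ i s x y,
      F i x s ≥ F i y s + ⟪g i y s, x - y⟫ + μ / 2 * ‖x - y‖ ^ 2)
    -- Assumption 2: interpolation at a global minimizer x*
    (xstar : EuclideanSpace ℝ (Fin d))
    (hinterp : ∀ i s, g i xstar s = 0)
    -- Local SGD: K local steps per round, R rounds, T = RK total iterations
    (K T : ℕ)
    -- stepsize η = 1/L
    (η : ℝ) (hη : η = 1 / L)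
    -- i.i.d. samples ξᵢ⁽ᵗ⁾ ∼ Dᵢ, independent across nodes and iterations
    (ξ : Fin n → ℕ → Ω → S)
    -- the Local SGD iterates: common initialization, local steps, averaging at times in I
    (X : ℕ → Fin n → Ω → EuclideanSpace ℝ (Fin d))
    (x0 : EuclideanSpace ℝ (Fin d))
    (hX0 : ∀ i ω, X 0 i ω = x0)
    (hXrec : ∀ t i ω,
      X (t + 1) i ω =
        if (t + 1) % K = 0 then
          (n : ℝ)⁻¹ • ∑ j, (X t j ω - η • g j (X t j ω) (ξ j t ω))
        else X t i ω - η • g i (X t i ω) (ξ i t ω)) :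
    ∫ ω, ‖(n : ℝ)⁻¹ • ∑ i, X T i ω - xstar‖ ^ 2 ∂P
      ≤ (1 - μ / L) ^ T * ‖x0 - xstar‖ ^ 2 := by
  subst hη
  obtain hE | hE := subsingleton_or_nontrivial (EuclideanSpace ℝ (Fin d))
  · simp [norm_of_subsingleton]
  obtain ⟨s⟩ : Nonempty S := @nonempty_of_isProbabilityMeasure _ _ (D ⟨0, hn⟩) (hD _)
  have hq : 0 ≤ 1 - μ / L := sub_nonneg.2 <| (div_le_one hL).2 <|
    le_of_strongConvex_of_lipschitz_gradient (hgrad ⟨0, hn⟩ s) (hsmooth _ s) (hsc _ s)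
  have hbound : ∀ ω,
      ‖(n : ℝ)⁻¹ • ∑ i, X T i ω - xstar‖ ^ 2 ≤ (1 - μ / L) ^ T * ‖x0 - xstar‖ ^ 2 :=
    fun ω => (sq_norm_average_sub_le_meanSqDist hn _ _).trans <|
      meanSqDist_localSGD_le hn hq (fun t i x => x - (1 / L) • g i x (ξ i t ω))
        (fun t i x => sq_norm_sub_smul_gradient_sub_le hL hμ.le (hgrad i _) (hsmooth i _)
          (hsc i _) (hinterp i _) x)
        (fun t => t % K = 0) (fun t i => X t i ω) (fun i => hX0 i ω) (fun t i => hXrec t i ω) T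
  calc ∫ ω, ‖(n : ℝ)⁻¹ • ∑ i, X T i ω - xstar‖ ^ 2 ∂P
      ≤ ∫ _, (1 - μ / L) ^ T * ‖x0 - xstar‖ ^ 2 ∂P :=
        integral_mono_of_nonneg (ae_of_all _ fun _ => by positivity) (integrable_const _)
          (ae_of_all _ hbound)
    _ = (1 - μ / L) ^ T * ‖x0 - xstar‖ ^ 2 := by simp

/-- Theorem 1: under μ-strong convexity (Assumption 1) and interpolation (Assumption 2)
with μ > 0, Local SGD with stepsize η = 1/L satisfies, for T = RK total iterations,
`E ‖x̄⁽ᵀ⁾ - x*‖² ≤ (1 - μ/L)^T ‖x⁽⁰⁾ - x*‖²`. -/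
theorem local_sgd_strongly_convex
    {d n : ℕ} (hn : 0 < n)
    {Ω S : Type*} [MeasurableSpace Ω] [MeasurableSpace S]
    -- underlying probability space
    (P : Measure Ω) [IsProbabilityMeasure P]
    -- local sample distributions
    (D : Fin n → Measure S) (hD : ∀ i, IsProbabilityMeasure (D i))
    -- sample loss functions and their (stochastic) gradients
    (F : Fin n → EuclideanSpace ℝ (Fin d) → S → ℝ)
    (g : Fin n → EuclideanSpace ℝ (Fin d) → S → EuclideanSpace ℝ (Fin d))
    (L μ : ℝ) (hL : 0 < L) (hμ : 0 < μ)
    -- g i x s is the gradient of the sample loss F i · s at x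
    (hgrad : ∀ i s x, HasGradientAt (fun y => F i y s) (g i x s) x)
    (hgmeas : ∀ i, Measurable (fun p : EuclideanSpace ℝ (Fin d) × S => g i p.1 p.2))
    -- each sample loss is L-smooth
    (hsmooth : ∀ i s x y, ‖g i x s - g i y s‖ ≤ L * ‖x - y‖)
    -- Assumption 1: μ-strong convexity of each sample loss
    (hsc : ∀ i s x y,
      F i x s ≥ F i y s + ⟪g i y s, x - y⟫ + μ / 2 * ‖x - y‖ ^ 2)
    -- integrability of the sample losses
    (hFint : ∀ i x, Integrable (fun s => F i x s) (D i))
    -- local objectives fᵢ(x) = E_{ξᵢ ∼ Dᵢ}[F i x ξᵢ] and global objective f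
    (fi : Fin n → EuclideanSpace ℝ (Fin d) → ℝ)
    (hfi : ∀ i x, fi i x = ∫ s, F i x s ∂(D i))
    (f : EuclideanSpace ℝ (Fin d) → ℝ)
    (hf : ∀ x, f x = (n : ℝ)⁻¹ * ∑ i, fi i x)
    -- Assumption 2: interpolation at a global minimizer x*
    (xstar : EuclideanSpace ℝ (Fin d)) (hmin : ∀ x, f xstar ≤ f x)
    (hinterp : ∀ i s, g i xstar s = 0)
    -- Local SGD: K local steps per round, R rounds, T = RK total iterations
    (K R T : ℕ) (hK : 0 < K) (hR : 0 < R) (hT : T = R * K)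
    -- stepsize η = 1/L
    (η : ℝ) (hη : η = 1 / L)
    -- i.i.d. samples ξᵢ⁽ᵗ⁾ ∼ Dᵢ, independent across nodes and iterations
    (ξ : Fin n → ℕ → Ω → S)
    (hξmeas : ∀ i t, Measurable (ξ i t))
    (hindep : iIndepFun (fun p : Fin n × ℕ => ξ p.1 p.2) P)
    (hdist : ∀ i t, P.map (ξ i t) = D i)
    -- the Local SGD iterates: common initialization, local steps, averaging at times in I
    (X : ℕ → Fin n → Ω → EuclideanSpace ℝ (Fin d))
    (x0 : EuclideanSpace ℝ (Fin d))
    (hX0 : ∀ i ω, X 0 i ω = x0)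
    (hXrec : ∀ t i ω,
      X (t + 1) i ω =
        if (t + 1) % K = 0 then
          (n : ℝ)⁻¹ • ∑ j, (X t j ω - η • g j (X t j ω) (ξ j t ω))
        else X t i ω - η • g i (X t i ω) (ξ i t ω)) :
    ∫ ω, ‖(n : ℝ)⁻¹ • ∑ i, X T i ω - xstar‖ ^ 2 ∂P
      ≤ (1 - μ / L) ^ T * ‖x0 - xstar‖ ^ 2 :=
  local_sgd_strongly_convex_general hn P D hD F g L μ hL hμ hgrad hsmooth hsc xstar hinterp K T η hη
    ξ X x0 hX0 hXrec
end

section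
/- Second-moment bound on the averaged stochastic gradient under SGC: with each f_i L-smooth (hence f is L-smooth) and Assumption 3 holding with constant ρ, for any points x_1, ..., x_n with average x̄, E‖(1/n)∑_{i=1}^n ∇f_i(x_i, ξ_i)‖² ≤ 2ρ·E‖∇f(x̄)‖² + 2L²ρ·(1/n)∑_{i=1}^n E‖x_i − x̄‖². -/
/-!
Since `‖(1/n) ∑ vᵢ‖² ≤ (1/n) ∑ ‖vᵢ‖²`, the second moment of the averaged stochastic gradient is
at most the average of the second moments `E‖∇fᵢ(xᵢ, ξᵢ)‖² ≤ ρ ‖∇f(xᵢ)‖²`. As `∇f` is the average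
of the `L`-Lipschitz `∇fᵢ`, it is `L`-Lipschitz, whence `‖∇f(xᵢ)‖² ≤ 2‖∇f(x̄)‖² + 2L²‖xᵢ - x̄‖²`.

Independence of the samples rules out that the average has an integrable squared norm while some
summand does not (whose Bochner integral would be the junk value `0`): if `A` and `B` are
independent and `‖A + B‖²` is integrable, then by Fubini so is `‖A + b‖²` for some fixed `b`,
hence so is `‖A‖²`.
-/

open MeasureTheory ProbabilityTheory Finset
open scoped RealInnerProductSpace

theorem sq_norm_le_of_norm_sub_le {E : Type*} [SeminormedAddCommGroup E] {u v : E} {r : ℝ}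
    (h : ‖u - v‖ ≤ r) : ‖u‖ ^ 2 ≤ 2 * ‖v‖ ^ 2 + 2 * r ^ 2 := by
  have huv : ‖u‖ ≤ ‖v‖ + r := (norm_le_insert' u v).trans (by gcongr)
  nlinarith [norm_nonneg u, sq_nonneg (‖v‖ - r)]

theorem sq_norm_sum_le_card_mul {ι E : Type*} [SeminormedAddCommGroup E] (s : Finset ι)
    (v : ι → E) : ‖∑ i ∈ s, v i‖ ^ 2 ≤ #s * ∑ i ∈ s, ‖v i‖ ^ 2 := by
  calc ‖∑ i ∈ s, v i‖ ^ 2 ≤ (∑ i ∈ s, ‖v i‖) ^ 2 := by gcongr; exact norm_sum_le s v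
    _ ≤ #s * ∑ i ∈ s, ‖v i‖ ^ 2 := sq_sum_le_card_mul_sum_sq

theorem norm_average_le {ι E : Type*} [SeminormedAddCommGroup E] [NormedSpace ℝ E]
    {s : Finset ι} (hs : s.Nonempty) {v : ι → E} {C : ℝ} (hv : ∀ i ∈ s, ‖v i‖ ≤ C) :
    ‖(#s : ℝ)⁻¹ • ∑ i ∈ s, v i‖ ≤ C := by
  have hcard : (0 : ℝ) < #s := by exact_mod_cast hs.card_pos
  rw [norm_smul, Real.norm_of_nonneg (by positivity), inv_mul_le_iff₀ hcard]
  calc ‖∑ i ∈ s, v i‖ ≤ ∑ i ∈ s, ‖v i‖ := norm_sum_le s v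
    _ ≤ ∑ _i ∈ s, C := sum_le_sum hv
    _ = #s * C := by rw [sum_const, nsmul_eq_mul]

section Gradient

variable {F : Type*} [NormedAddCommGroup F] [InnerProductSpace ℝ F] [CompleteSpace F] {x : F}

theorem HasGradientAt.const_mul {f : F → ℝ} {f' : F} (c : ℝ) (h : HasGradientAt f f' x) :
    HasGradientAt (fun y => c * f y) (c • f') x := by
  rw [hasGradientAt_iff_hasFDerivAt, map_smul]
  exact h.hasFDerivAt.const_mul c

theorem HasGradientAt.fun_sum {ι : Type*} {s : Finset ι} {f : ι → F → ℝ} {f' : ι → F}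
    (h : ∀ i ∈ s, HasGradientAt (f i) (f' i) x) :
    HasGradientAt (fun y => ∑ i ∈ s, f i y) (∑ i ∈ s, f' i) x := by
  rw [hasGradientAt_iff_hasFDerivAt, map_sum]
  exact HasFDerivAt.fun_sum fun i hi => (h i hi).hasFDerivAt

end Gradient

namespace ProbabilityTheory

variable {Ω E : Type*} [MeasurableSpace Ω] {P : Measure Ω} [IsProbabilityMeasure P]
  [NormedAddCommGroup E] [MeasurableSpace E] [BorelSpace E] [SecondCountableTopology E]

theorem IndepFun.integrable_sq_norm_left_of_add {A B : Ω → E} (hA : Measurable A)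
    (hB : Measurable B) (hAB : IndepFun A B P)
    (h : Integrable (fun ω => ‖A ω + B ω‖ ^ 2) P) : Integrable (fun ω => ‖A ω‖ ^ 2) P := by
  have hlaw : P.map (fun ω => (A ω, B ω)) = (P.map A).prod (P.map B) :=
    (indepFun_iff_map_prod_eq_prod_map_map hA.aemeasurable hB.aemeasurable).mp hAB
  have hsq_add : Measurable fun p : E × E => ‖p.1 + p.2‖ ^ 2 := by fun_prop
  have hjoint : Integrable (fun p : E × E => ‖p.1 + p.2‖ ^ 2) ((P.map A).prod (P.map B)) := by
    rw [← hlaw, integrable_map_measure hsq_add.aestronglyMeasurable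
      (hA.prodMk hB).aemeasurable]
    exact h
  have : IsProbabilityMeasure (P.map B) := Measure.isProbabilityMeasure_map hB.aemeasurable
  obtain ⟨b, hb⟩ := hjoint.prod_left_ae.exists
  have hAlaw : Integrable (fun a : E => ‖a‖ ^ 2) (P.map A) := by
    refine ((hb.const_mul 2).add (integrable_const (2 * ‖b‖ ^ 2))).mono' (by fun_prop)
      (ae_of_all _ fun a => ?_)
    rw [Real.norm_of_nonneg (by positivity)]
    exact sq_norm_le_of_norm_sub_le (v := a + b) (by rw [sub_add_cancel_left, norm_neg])
  exact (integrable_map_measure (by fun_prop) hA.aemeasurable).mp hAlaw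

variable {ι : Type*} {Y : ι → Ω → E}

theorem iIndepFun.integrable_sq_norm_of_sum (hY : ∀ i, Measurable (Y i)) (hind : iIndepFun Y P)
    {s : Finset ι} (h : Integrable (fun ω => ‖∑ i ∈ s, Y i ω‖ ^ 2) P) {j : ι} (hj : j ∈ s) :
    Integrable (fun ω => ‖Y j ω‖ ^ 2) P := by
  classical
  have hrest : IndepFun (Y j) (∑ i ∈ s.erase j, Y i) P :=
    (hind.indepFun_finsetSum_of_notMem hY (notMem_erase j s)).symm
  refine hrest.integrable_sq_norm_left_of_add (hY j) (by fun_prop) ?_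
  convert h using 4 with ω
  rw [Finset.sum_apply, add_sum_erase s (fun i => Y i ω) hj]

theorem iIndepFun.integral_sq_norm_sum_le (hY : ∀ i, Measurable (Y i)) (hind : iIndepFun Y P)
    (s : Finset ι) :
    ∫ ω, ‖∑ i ∈ s, Y i ω‖ ^ 2 ∂P ≤ #s * ∑ i ∈ s, ∫ ω, ‖Y i ω‖ ^ 2 ∂P := by
  by_cases hsum : Integrable (fun ω => ‖∑ i ∈ s, Y i ω‖ ^ 2) P
  · have hY2 : ∀ i ∈ s, Integrable (fun ω => ‖Y i ω‖ ^ 2) P := fun i hi =>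
      hind.integrable_sq_norm_of_sum hY hsum hi
    rw [← integral_finsetSum s hY2, ← integral_const_mul]
    exact integral_mono hsum ((integrable_finsetSum s hY2).const_mul _)
      fun ω => sq_norm_sum_le_card_mul s fun i => Y i ω
  · rw [integral_undef hsum]
    exact mul_nonneg (by positivity) (sum_nonneg fun i _ => integral_nonneg fun ω => by positivity)

theorem iIndepFun.integral_sq_norm_average_le [NormedSpace ℝ E] (hY : ∀ i, Measurable (Y i))
    (hind : iIndepFun Y P) (s : Finset ι) :
    ∫ ω, ‖(#s : ℝ)⁻¹ • ∑ i ∈ s, Y i ω‖ ^ 2 ∂P ≤ (#s : ℝ)⁻¹ * ∑ i ∈ s, ∫ ω, ‖Y i ω‖ ^ 2 ∂P := by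
  simp_rw [norm_smul, mul_pow, Real.norm_of_nonneg (inv_nonneg.2 (Nat.cast_nonneg #s))]
  rw [integral_const_mul]
  calc ((#s : ℝ)⁻¹) ^ 2 * ∫ ω, ‖∑ i ∈ s, Y i ω‖ ^ 2 ∂P
      ≤ ((#s : ℝ)⁻¹) ^ 2 * (#s * ∑ i ∈ s, ∫ ω, ‖Y i ω‖ ^ 2 ∂P) := by
        gcongr; exact hind.integral_sq_norm_sum_le hY s
    _ = (#s : ℝ)⁻¹ * ∑ i ∈ s, ∫ ω, ‖Y i ω‖ ^ 2 ∂P := by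
        rcases eq_or_ne (#s : ℝ) 0 with hs | hs
        · simp [hs]
        · field_simp

end ProbabilityTheory

theorem second_moment_bound_sgc_general
    {d n : ℕ} (hn : 0 < n)
    {Ω S : Type*} [MeasurableSpace Ω] [MeasurableSpace S]
    -- underlying probability space
    (P : Measure Ω) [IsProbabilityMeasure P]
    -- local sample distributions
    (D : Fin n → Measure S)
    -- sample loss functions and their (stochastic) gradients
    (g : Fin n → EuclideanSpace ℝ (Fin d) → S → EuclideanSpace ℝ (Fin d))
    (L : ℝ)
    (hgmeas : ∀ i, Measurable (fun p : EuclideanSpace ℝ (Fin d) × S => g i p.1 p.2))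
    -- local objectives fᵢ(x) = E_{ξᵢ ∼ Dᵢ}[F i x ξᵢ] and global objective f
    (fi : Fin n → EuclideanSpace ℝ (Fin d) → ℝ)
    (f : EuclideanSpace ℝ (Fin d) → ℝ)
    (hf : ∀ x, f x = (n : ℝ)⁻¹ * ∑ i, fi i x)
    -- each fᵢ is L-smooth: gfi i is its gradient and it is L-Lipschitz
    (gfi : Fin n → EuclideanSpace ℝ (Fin d) → EuclideanSpace ℝ (Fin d))
    (hgfi : ∀ i x, HasGradientAt (fi i) (gfi i x) x)
    (hsmooth : ∀ i x y, ‖gfi i x - gfi i y‖ ≤ L * ‖x - y‖)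
    -- gradient of the global objective
    (gradf : EuclideanSpace ℝ (Fin d) → EuclideanSpace ℝ (Fin d))
    (hgradf : ∀ x, HasGradientAt f (gradf x) x)
    -- Assumption 3: strong growth condition with constant ρ ≥ 1
    (ρ : ℝ) (hρ : 1 ≤ ρ)
    (hSGC : ∀ i x, ∫ s, ‖g i x s‖ ^ 2 ∂(D i) ≤ ρ * ‖gradf x‖ ^ 2)
    -- the points x₁, ..., xₙ and their average, and independent samples ξ₁, ..., ξₙ
    (x : Fin n → EuclideanSpace ℝ (Fin d))
    (xbar : EuclideanSpace ℝ (Fin d))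
    (ξ : Fin n → Ω → S)
    (hξmeas : ∀ i, Measurable (ξ i))
    (hindep : iIndepFun ξ P)
    (hdist : ∀ i, P.map (ξ i) = D i) :
    ∫ ω, ‖(n : ℝ)⁻¹ • ∑ i, g i (x i) (ξ i ω)‖ ^ 2 ∂P
      ≤ 2 * ρ * ‖gradf xbar‖ ^ 2
        + 2 * L ^ 2 * ρ * ((n : ℝ)⁻¹ * ∑ i, ‖x i - xbar‖ ^ 2) := by
  have hcard : (#(univ : Finset (Fin n)) : ℝ) = n := by simp
  have hgradf_eq : ∀ y, gradf y = (n : ℝ)⁻¹ • ∑ i, gfi i y := fun y =>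
    (hgradf y).unique <| funext hf ▸ (HasGradientAt.fun_sum fun i _ => hgfi i y).const_mul _
  have hlip : ∀ a b, ‖gradf a - gradf b‖ ≤ L * ‖a - b‖ := fun a b => by
    rw [hgradf_eq, hgradf_eq, ← smul_sub, ← sum_sub_distrib, ← hcard]
    exact norm_average_le (univ_nonempty_iff.2 (Fin.pos_iff_nonempty.1 hn))
      fun i _ => hsmooth i a b
  have hgx : ∀ i, Measurable (g i (x i)) := fun i =>
    (hgmeas i).comp (measurable_const.prodMk measurable_id)
  have hmoment : ∀ i, ∫ ω, ‖g i (x i) (ξ i ω)‖ ^ 2 ∂P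
      ≤ 2 * ρ * ‖gradf xbar‖ ^ 2 + 2 * L ^ 2 * ρ * ‖x i - xbar‖ ^ 2 := fun i => by
    rw [← integral_map (hξmeas i).aemeasurable ((hgx i).norm.pow_const 2).aestronglyMeasurable,
      hdist i]
    calc ∫ s, ‖g i (x i) s‖ ^ 2 ∂(D i) ≤ ρ * ‖gradf (x i)‖ ^ 2 := hSGC i (x i)
      _ ≤ ρ * (2 * ‖gradf xbar‖ ^ 2 + 2 * (L * ‖x i - xbar‖) ^ 2) := by
        gcongr
        exact sq_norm_le_of_norm_sub_le (hlip _ _)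
      _ = 2 * ρ * ‖gradf xbar‖ ^ 2 + 2 * L ^ 2 * ρ * ‖x i - xbar‖ ^ 2 := by ring
  calc ∫ ω, ‖(n : ℝ)⁻¹ • ∑ i, g i (x i) (ξ i ω)‖ ^ 2 ∂P
      ≤ (n : ℝ)⁻¹ * ∑ i, ∫ ω, ‖g i (x i) (ξ i ω)‖ ^ 2 ∂P := by
        rw [← hcard]
        exact (hindep.comp _ hgx).integral_sq_norm_average_le (fun i => (hgx i).comp (hξmeas i)) _
    _ ≤ (n : ℝ)⁻¹ * ∑ i, (2 * ρ * ‖gradf xbar‖ ^ 2 + 2 * L ^ 2 * ρ * ‖x i - xbar‖ ^ 2) := by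
        gcongr with i
        exact hmoment i
    _ = 2 * ρ * ‖gradf xbar‖ ^ 2 + 2 * L ^ 2 * ρ * ((n : ℝ)⁻¹ * ∑ i, ‖x i - xbar‖ ^ 2) := by
        rw [sum_add_distrib, sum_const, card_univ, Fintype.card_fin, nsmul_eq_mul, ← mul_sum]
        field_simp

/-- Second-moment bound on the averaged stochastic gradient under the strong growth
condition: with each fᵢ L-smooth (hence f L-smooth) and Assumption 3 with constant ρ,
for any points x₁, ..., xₙ with average x̄,
`E‖(1/n) ∑ᵢ ∇fᵢ(xᵢ, ξᵢ)‖² ≤ 2ρ E‖∇f(x̄)‖² + 2L²ρ (1/n) ∑ᵢ E‖xᵢ - x̄‖²`. -/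
theorem second_moment_bound_sgc
    {d n : ℕ} (hn : 0 < n)
    {Ω S : Type*} [MeasurableSpace Ω] [MeasurableSpace S]
    -- underlying probability space
    (P : Measure Ω) [IsProbabilityMeasure P]
    -- local sample distributions
    (D : Fin n → Measure S) (hD : ∀ i, IsProbabilityMeasure (D i))
    -- sample loss functions and their (stochastic) gradients
    (F : Fin n → EuclideanSpace ℝ (Fin d) → S → ℝ)
    (g : Fin n → EuclideanSpace ℝ (Fin d) → S → EuclideanSpace ℝ (Fin d))
    (L : ℝ) (hL : 0 < L)
    (hgmeas : ∀ i, Measurable (fun p : EuclideanSpace ℝ (Fin d) × S => g i p.1 p.2))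
    -- integrability of the sample losses and gradients
    (hFint : ∀ i x, Integrable (fun s => F i x s) (D i))
    (hgint : ∀ i x, Integrable (fun s => g i x s) (D i))
    -- local objectives fᵢ(x) = E_{ξᵢ ∼ Dᵢ}[F i x ξᵢ] and global objective f
    (fi : Fin n → EuclideanSpace ℝ (Fin d) → ℝ)
    (hfi : ∀ i x, fi i x = ∫ s, F i x s ∂(D i))
    (f : EuclideanSpace ℝ (Fin d) → ℝ)
    (hf : ∀ x, f x = (n : ℝ)⁻¹ * ∑ i, fi i x)
    -- each fᵢ is L-smooth: gfi i is its gradient and it is L-Lipschitz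
    (gfi : Fin n → EuclideanSpace ℝ (Fin d) → EuclideanSpace ℝ (Fin d))
    (hgfi : ∀ i x, HasGradientAt (fi i) (gfi i x) x)
    (hsmooth : ∀ i x y, ‖gfi i x - gfi i y‖ ≤ L * ‖x - y‖)
    -- unbiasedness: the expected stochastic gradient is the gradient of fᵢ
    (hunbiased : ∀ i x, (∫ s, g i x s ∂(D i)) = gfi i x)
    -- gradient of the global objective
    (gradf : EuclideanSpace ℝ (Fin d) → EuclideanSpace ℝ (Fin d))
    (hgradf : ∀ x, HasGradientAt f (gradf x) x)
    -- Assumption 3: strong growth condition with constant ρ ≥ 1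
    (ρ : ℝ) (hρ : 1 ≤ ρ)
    (hSGC : ∀ i x, ∫ s, ‖g i x s‖ ^ 2 ∂(D i) ≤ ρ * ‖gradf x‖ ^ 2)
    -- the points x₁, ..., xₙ and their average, and independent samples ξ₁, ..., ξₙ
    (x : Fin n → EuclideanSpace ℝ (Fin d))
    (xbar : EuclideanSpace ℝ (Fin d)) (hxbar : xbar = (n : ℝ)⁻¹ • ∑ i, x i)
    (ξ : Fin n → Ω → S)
    (hξmeas : ∀ i, Measurable (ξ i))
    (hindep : iIndepFun ξ P)
    (hdist : ∀ i, P.map (ξ i) = D i) :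
    ∫ ω, ‖(n : ℝ)⁻¹ • ∑ i, g i (x i) (ξ i ω)‖ ^ 2 ∂P
      ≤ 2 * ρ * ‖gradf xbar‖ ^ 2
        + 2 * L ^ 2 * ρ * ((n : ℝ)⁻¹ * ∑ i, ‖x i - xbar‖ ^ 2) :=
  second_moment_bound_sgc_general hn P D g L hgmeas fi f hf gfi hgfi hsmooth gradf hgradf ρ hρ hSGC
    x xbar ξ hξmeas hindep hdist
end

section
/- Lower bound for general convex losses (Proposition 1): let K ≥ 1, R ≥ 1, T = RK, n = 4R, d = 1, f_1(x) = (L/2)x², and f_2 = ... = f_n = 0, so f(x) = (L/(2n))x². These functions are L-smooth and satisfy Assumptions 1 and 2 with μ = 0 and similarity constant c = 0. If Local (S)GD is run on this instance with any constant stepsize η ≤ 1/L from x^{(0)} = 1, then min_{t ∈ [T]}(f(x̄^{(t)}) − f*) ≥ KL/(16T), i.e. the error is Ω(KL/T). -/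
/-!
Only worker `0` feels a gradient, so its local steps contract its coordinate by
`a = 1 - ηL ≥ 0` while the other workers stay put; averaging then multiplies the common
value by `(n - 1 + a^K) / n ≥ 1 - 1/n` per round. Up to time `T = RK` at most `R` rounds
have happened (counting the unfinished one), so the mean is at least `(1 - 1/n)^R`, and for
`n = 4R` Bernoulli's inequality gives `x̄² ≥ 1/2`, i.e. `f(x̄) ≥ L/(4n) = KL/(16T)`.
-/

theorem Nat.add_one_mod_of_add_one_mod_ne_zero {t K : ℕ} (h : (t + 1) % K ≠ 0) :
    (t + 1) % K = t % K + 1 := by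
  have := Nat.div_add_mod (t + 1) K
  have := Nat.div_add_mod t K
  rw [Nat.succ_div_of_mod_ne_zero h] at *
  omega

theorem Nat.mod_add_one_of_add_one_mod_eq_zero {t K : ℕ} (h : (t + 1) % K = 0) :
    t % K + 1 = K := by
  have := Nat.div_add_mod (t + 1) K
  have := Nat.div_add_mod t K
  rw [Nat.succ_div_of_mod_eq_zero h, Nat.mul_succ] at *
  omega

theorem Nat.div_lt_of_le_mul_of_mod_ne_zero {t K R : ℕ} (ht : t ≤ R * K) (hmod : t % K ≠ 0) :
    t / K < R := by
  have := Nat.div_add_mod t K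
  refine Nat.lt_of_mul_lt_mul_left (a := K) ?_
  rw [Nat.mul_comm K R]
  omega

/-- The mean of the vector `(c, 1, …, 1) ∈ ℝⁿ`. -/
noncomputable def avgHead (n : ℕ) (c : ℝ) : ℝ := (n - 1 + c) / n

section

variable {n : ℕ}

theorem mean_ite_val_eq_zero [NeZero n] (c : ℝ) :
    (n : ℝ)⁻¹ * ∑ j : Fin n, (if (j : ℕ) = 0 then c else 1) = avgHead n c := by
  obtain ⟨m, rfl⟩ := Nat.exists_eq_succ_of_ne_zero (NeZero.ne n)
  simp [Fin.sum_univ_succ, avgHead]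
  ring

theorem mean_mul_ite_val_eq_zero [NeZero n] (s c : ℝ) :
    (n : ℝ)⁻¹ * ∑ j : Fin n, s * (if (j : ℕ) = 0 then c else 1) = s * avgHead n c := by
  rw [← Finset.mul_sum, mul_left_comm, mean_ite_val_eq_zero]

theorem avgHead_one [NeZero n] : avgHead n 1 = 1 := by
  simp [avgHead, NeZero.ne]

theorem avgHead_mono {c c' : ℝ} (h : c ≤ c') : avgHead n c ≤ avgHead n c' := by
  unfold avgHead
  gcongr

theorem avgHead_zero_nonneg : 0 ≤ avgHead n 0 := by
  unfold avgHead
  rcases n.eq_zero_or_pos with rfl | hn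
  · simp
  · have : (1 : ℝ) ≤ n := by exact_mod_cast hn
    positivity

theorem avgHead_zero_le_one : avgHead n 0 ≤ 1 := by
  unfold avgHead
  rcases n.eq_zero_or_pos with rfl | hn
  · simp
  · rw [div_le_one (by exact_mod_cast hn)]
    linarith

theorem avgHead_zero_pos (hn : 2 ≤ n) : 0 < avgHead n 0 := by
  unfold avgHead
  have : (2 : ℝ) ≤ n := by exact_mod_cast hn
  apply div_pos <;> linarith

theorem half_le_sq_of_avgHead_zero_pow_le {R : ℕ} (hR : 0 < R) (hn : n = 4 * R) {x : ℝ}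
    (hx : avgHead n 0 ^ R ≤ x) : 1 / 2 ≤ x ^ 2 := by
  subst hn
  have hR' : (1 : ℝ) ≤ R := by exact_mod_cast hR
  have hb : avgHead (4 * R) 0 = 1 + -(1 / (4 * R)) := by
    unfold avgHead
    push_cast
    field_simp
    ring
  have bernoulli := one_add_mul_le_pow (a := -(1 / (4 * (R : ℝ)))) (by
    rw [neg_le_neg_iff, div_le_iff₀ (by positivity)]
    linarith) (2 * R)
  calc (1 : ℝ) / 2 = 1 + ((2 * R : ℕ) : ℝ) * -(1 / (4 * R)) := by
        push_cast
        field_simp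
        ring
    _ ≤ (avgHead (4 * R) 0 ^ R) ^ 2 := by rw [hb, ← pow_mul, mul_comm R]; exact bernoulli
    _ ≤ x ^ 2 := pow_le_pow_left₀ (pow_nonneg avgHead_zero_nonneg R) hx 2

end

section headQuadratic

variable {n : ℕ} {L : ℝ} {fi g : Fin n → ℝ → ℝ}

theorem hasDerivAt_of_eq_ite_sq (hfi : ∀ i x, fi i x = if (i : ℕ) = 0 then L / 2 * x ^ 2 else 0)
    (hg : ∀ i x, g i x = if (i : ℕ) = 0 then L * x else 0) (i : Fin n) (x : ℝ) :
    HasDerivAt (fi i) (g i x) x := by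
  rw [funext (hfi i), hg]
  split_ifs
  · exact ((hasDerivAt_pow 2 x).const_mul (L / 2)).congr_deriv (by push_cast; ring)
  · exact hasDerivAt_const x 0

theorem abs_sub_le_of_eq_ite_mul (hL : 0 ≤ L)
    (hg : ∀ i x, g i x = if (i : ℕ) = 0 then L * x else 0) (i : Fin n) (x y : ℝ) :
    |g i x - g i y| ≤ L * |x - y| := by
  rw [hg, hg]
  split_ifs
  · rw [← mul_sub, abs_mul, abs_of_nonneg hL]
  · simpa using mul_nonneg hL (abs_nonneg (x - y))

theorem convexOn_of_eq_ite_sq (hL : 0 ≤ L)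
    (hfi : ∀ i x, fi i x = if (i : ℕ) = 0 then L / 2 * x ^ 2 else 0) (i : Fin n) :
    ConvexOn ℝ Set.univ (fi i) := by
  rw [funext (hfi i)]
  split_ifs
  · simpa [smul_eq_mul] using (even_two.convexOn_pow (𝕜 := ℝ)).smul (c := L / 2) (by positivity)
  · exact convexOn_const 0 convex_univ

/-- Moving every worker but `0` to `1` costs nothing locally but moves the mean away from the
minimizer, so no `c' > 0` works in the similarity inequality. -/
theorem not_forall_similarity_of_eq_ite_sq (hL : 0 < L) (hn : 2 ≤ n)
    (hfi : ∀ i x, fi i x = if (i : ℕ) = 0 then L / 2 * x ^ 2 else 0)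
    {f : ℝ → ℝ} (hf : ∀ x, f x = L / (2 * n) * x ^ 2) {c' : ℝ} (hc' : 0 < c') :
    ¬ ∀ xs : Fin n → ℝ,
      (n : ℝ)⁻¹ * ∑ i, (fi i (xs i) - fi i 0) ≥ c' * (f ((n : ℝ)⁻¹ * ∑ i, xs i) - f 0) := by
  have : NeZero n := ⟨by omega⟩
  intro similar
  have h := similar fun i => if (i : ℕ) = 0 then 0 else 1
  have hlocal : ∀ i : Fin n, fi i (if (i : ℕ) = 0 then 0 else 1) - fi i 0 = 0 := by
    intro i
    simp only [hfi]
    split_ifs <;> ring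
  simp only [hlocal, Finset.sum_const_zero, mul_zero, mean_ite_val_eq_zero, hf] at h
  rw [zero_pow two_ne_zero, mul_zero, sub_zero] at h
  have hb := avgHead_zero_pos hn
  have : 0 < c' * (L / (2 * n) * avgHead n 0 ^ 2) := by positivity
  linarith

end headQuadratic

section

variable {n : ℕ}

/-- The Local GD iterates when only worker `0` has a loss, `L x² / 2`, and `a = 1 - η L`:
worker `0` contracts by `a` per local step, and each averaging multiplies the common value by
`avgHead n (a ^ K)`. -/
noncomputable def localGDIterate (n K : ℕ) (a : ℝ) (t : ℕ) (i : Fin n) : ℝ :=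
  avgHead n (a ^ K) ^ (t / K) * if (i : ℕ) = 0 then a ^ (t % K) else 1

theorem localGD_eq_localGDIterate [NeZero n] {K : ℕ} {L η : ℝ} {g : Fin n → ℝ → ℝ}
    (hg : ∀ i x, g i x = if (i : ℕ) = 0 then L * x else 0) {X : ℕ → Fin n → ℝ}
    (hX0 : ∀ i, X 0 i = 1)
    (hXrec : ∀ t i, X (t + 1) i =
      if (t + 1) % K = 0 then (n : ℝ)⁻¹ * ∑ j, (X t j - η * g j (X t j))
      else X t i - η * g i (X t i))
    (t : ℕ) : X t = localGDIterate n K (1 - η * L) t := by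
  induction t with
  | zero => ext i; simp [hX0, localGDIterate]
  | succ t ih =>
    ext i
    have local_step : ∀ j, X t j - η * g j (X t j) =
        avgHead n ((1 - η * L) ^ K) ^ (t / K) *
          if (j : ℕ) = 0 then (1 - η * L) ^ (t % K + 1) else 1 := by
      intro j
      rw [ih, hg, localGDIterate]
      split_ifs <;> ring
    rw [hXrec, localGDIterate]
    by_cases hcomm : (t + 1) % K = 0
    · simp_rw [if_pos hcomm, local_step, mean_mul_ite_val_eq_zero,
        Nat.mod_add_one_of_add_one_mod_eq_zero hcomm, Nat.succ_div_of_mod_eq_zero hcomm, hcomm]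
      simp [pow_succ]
    · rw [if_neg hcomm, local_step, Nat.add_one_mod_of_add_one_mod_ne_zero hcomm,
        Nat.succ_div_of_mod_ne_zero hcomm]

theorem mean_localGDIterate [NeZero n] (K : ℕ) (a : ℝ) (t : ℕ) :
    (n : ℝ)⁻¹ * ∑ i, localGDIterate n K a t i =
      avgHead n (a ^ K) ^ (t / K) * avgHead n (a ^ (t % K)) :=
  mean_mul_ite_val_eq_zero _ _

theorem avgHead_zero_pow_le_mean_localGDIterate [NeZero n] {K R : ℕ} {a : ℝ} (ha : 0 ≤ a)
    {t : ℕ} (ht : t ≤ R * K) :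
    avgHead n 0 ^ R ≤ (n : ℝ)⁻¹ * ∑ i, localGDIterate n K a t i := by
  have hb0 : 0 ≤ avgHead n 0 := avgHead_zero_nonneg
  have hround : avgHead n 0 ^ (t / K) ≤ avgHead n (a ^ K) ^ (t / K) :=
    pow_le_pow_left₀ hb0 (avgHead_mono (pow_nonneg ha K)) _
  rw [mean_localGDIterate]
  by_cases hmod : t % K = 0
  · have hdiv : t / K ≤ R := Nat.div_le_of_le_mul (by rwa [Nat.mul_comm])
    rw [hmod, pow_zero, avgHead_one, mul_one]
    exact (pow_le_pow_of_le_one hb0 avgHead_zero_le_one hdiv).trans hround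
  · calc avgHead n 0 ^ R
        ≤ avgHead n 0 ^ (t / K) * avgHead n 0 := by
          rw [← pow_succ]
          exact pow_le_pow_of_le_one hb0 avgHead_zero_le_one
            (Nat.div_lt_of_le_mul_of_mod_ne_zero ht hmod)
      _ ≤ _ := mul_le_mul hround (avgHead_mono (pow_nonneg ha _)) hb0
          ((pow_nonneg hb0 _).trans hround)

end

theorem lower_bound_general_convex_general
    (L : ℝ) (hL : 0 < L)
    (K R T n : ℕ) (hR : 0 < R) (hT : T = R * K) (hn : n = 4 * R)
    -- the local losses and their derivatives
    (fi : Fin n → ℝ → ℝ)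
    (hfi : ∀ i x, fi i x = if (i : ℕ) = 0 then L / 2 * x ^ 2 else 0)
    (g : Fin n → ℝ → ℝ)
    (hg : ∀ i x, g i x = if (i : ℕ) = 0 then L * x else 0)
    -- the global objective f(x) = (L/(2n)) x²
    (f : ℝ → ℝ) (hf : ∀ x, f x = L / (2 * n) * x ^ 2)
    -- stepsize η ≤ 1/L
    (η : ℝ) (hη : η ≤ 1 / L)
    -- the Local GD iterates, initialized at x⁽⁰⁾ = 1
    (X : ℕ → Fin n → ℝ)
    (hX0 : ∀ i, X 0 i = 1)
    (hXrec : ∀ t i, X (t + 1) i =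
      if (t + 1) % K = 0 then (n : ℝ)⁻¹ * ∑ j, (X t j - η * g j (X t j))
      else X t i - η * g i (X t i)) :
    -- every fᵢ has derivative g i, is L-smooth, convex,
    (∀ i x, HasDerivAt (fi i) (g i x) x) ∧
    (∀ i x y, |g i x - g i y| ≤ L * |x - y|) ∧
    (∀ i, ConvexOn ℝ Set.univ (fi i)) ∧
    -- interpolation holds at the global minimizer x* = 0,
    (∀ x, f 0 ≤ f x) ∧ (∀ i, g i 0 = 0) ∧
    -- the similarity constant of Definition 1 is c = 0,
    (∀ c' : ℝ, 0 < c' →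
      ¬ ∀ xs : Fin n → ℝ,
          (n : ℝ)⁻¹ * ∑ i, (fi i (xs i) - fi i 0)
            ≥ c' * (f ((n : ℝ)⁻¹ * ∑ i, xs i) - f 0)) ∧
    -- and the error lower bound holds for every t ∈ [T] = {1, ..., T}
    (∀ t : ℕ, 1 ≤ t → t ≤ T →
      f ((n : ℝ)⁻¹ * ∑ i, X t i) - f 0 ≥ K * L / (16 * T)) := by
  have : NeZero n := ⟨by omega⟩
  have hL0 := hL.le
  have ha : 0 ≤ 1 - η * L := by
    rw [le_div_iff₀ hL] at hη
    linarith
  refine ⟨hasDerivAt_of_eq_ite_sq hfi hg, abs_sub_le_of_eq_ite_mul hL0 hg,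
    convexOn_of_eq_ite_sq hL0 hfi,
    fun x => by rw [hf, hf, zero_pow two_ne_zero, mul_zero]; positivity, fun i => by simp [hg],
    fun c' hc' => not_forall_similarity_of_eq_ite_sq hL (by omega) hfi hf hc', ?_⟩
  intro t ht1 htT
  have hK : 0 < K := Nat.pos_of_ne_zero (by rintro rfl; omega)
  have hmean := avgHead_zero_pow_le_mean_localGDIterate (n := n) (R := R) ha (hT ▸ htT)
  rw [← localGD_eq_localGDIterate hg hX0 hXrec t] at hmean
  calc (K : ℝ) * L / (16 * T) = L / (2 * n) * (1 / 2) := by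
        rw [hT, hn]
        push_cast
        field_simp
        ring
    _ ≤ L / (2 * n) * ((n : ℝ)⁻¹ * ∑ i, X t i) ^ 2 := by
        gcongr
        exact half_le_sq_of_avgHead_zero_pow_le hR hn hmean
    _ = _ := by rw [hf, hf, zero_pow two_ne_zero, mul_zero, sub_zero]

/-- Proposition 1 (lower bound for general convex losses): with T = RK, n = 4R, d = 1,
f₁(x) = (L/2)x² and f₂ = ... = fₙ = 0 (so f(x) = (L/(2n))x²), the losses are L-smooth,
convex, satisfy interpolation, and have similarity constant c = 0; and if Local GD is run
with any constant stepsize η ≤ 1/L from x⁽⁰⁾ = 1, then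
`min_{t ∈ [T]} (f(x̄⁽ᵗ⁾) - f*) ≥ KL/(16T)`, i.e. the error is Ω(KL/T). -/
theorem lower_bound_general_convex
    (L : ℝ) (hL : 0 < L)
    (K R T n : ℕ) (hK : 0 < K) (hR : 0 < R) (hT : T = R * K) (hn : n = 4 * R)
    -- the local losses and their derivatives
    (fi : Fin n → ℝ → ℝ)
    (hfi : ∀ i x, fi i x = if (i : ℕ) = 0 then L / 2 * x ^ 2 else 0)
    (g : Fin n → ℝ → ℝ)
    (hg : ∀ i x, g i x = if (i : ℕ) = 0 then L * x else 0)
    -- the global objective f(x) = (L/(2n)) x²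
    (f : ℝ → ℝ) (hf : ∀ x, f x = L / (2 * n) * x ^ 2)
    -- stepsize η ≤ 1/L
    (η : ℝ) (hη0 : 0 ≤ η) (hη : η ≤ 1 / L)
    -- the Local GD iterates, initialized at x⁽⁰⁾ = 1
    (X : ℕ → Fin n → ℝ)
    (hX0 : ∀ i, X 0 i = 1)
    (hXrec : ∀ t i, X (t + 1) i =
      if (t + 1) % K = 0 then (n : ℝ)⁻¹ * ∑ j, (X t j - η * g j (X t j))
      else X t i - η * g i (X t i)) :
    -- every fᵢ has derivative g i, is L-smooth, convex,
    (∀ i x, HasDerivAt (fi i) (g i x) x) ∧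
    (∀ i x y, |g i x - g i y| ≤ L * |x - y|) ∧
    (∀ i, ConvexOn ℝ Set.univ (fi i)) ∧
    -- interpolation holds at the global minimizer x* = 0,
    (∀ x, f 0 ≤ f x) ∧ (∀ i, g i 0 = 0) ∧
    -- the similarity constant of Definition 1 is c = 0,
    (∀ c' : ℝ, 0 < c' →
      ¬ ∀ xs : Fin n → ℝ,
          (n : ℝ)⁻¹ * ∑ i, (fi i (xs i) - fi i 0)
            ≥ c' * (f ((n : ℝ)⁻¹ * ∑ i, xs i) - f 0)) ∧
    -- and the error lower bound holds for every t ∈ [T] = {1, ..., T}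
    (∀ t : ℕ, 1 ≤ t → t ≤ T →
      f ((n : ℝ)⁻¹ * ∑ i, X t i) - f 0 ≥ K * L / (16 * T)) :=
  lower_bound_general_convex_general L hL K R T n hR hT hn fi hfi g hg f hf η hη X hX0 hXrec
end

section
/- Intermediate claim in Proposition 1: in the instance with n nodes in dimension 1, f_1(x) = (L/2)x², f_2 = ... = f_n = 0, if Local GD is run with stepsize η ≤ 1/L from x^{(0)} = 1, then x_1^{(t)} ∈ [0,1] for all t, the sequence of round averages is nonincreasing and lies in [0,1], and for every round r, x̄^{((r+1)K)} ≥ ((n−1)/n)·x̄^{(rK)}. -/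
open scoped BigOperators

/-- Intermediate claims in Proposition 1: in the instance with n nodes in dimension 1,
f₁(x) = (L/2)x², f₂ = ... = fₙ = 0, if Local GD is run with stepsize η ≤ 1/L from
x⁽⁰⁾ = 1, then x₁⁽ᵗ⁾ ∈ [0,1] for all t, the sequence of round averages is nonincreasing
and lies in [0,1], and x̄⁽⁽ʳ⁺¹⁾ᴷ⁾ ≥ ((n-1)/n) x̄⁽ʳᴷ⁾ for every round r. -/
theorem lower_bound_general_convex_claims
    (L : ℝ) (hL : 0 < L)
    (K n : ℕ) (hK : 0 < K) (hn : 0 < n)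
    -- the local losses' derivatives: f₁'(x) = Lx, fᵢ' = 0 for i ≠ 1
    (g : Fin n → ℝ → ℝ)
    (hg : ∀ i x, g i x = if (i : ℕ) = 0 then L * x else 0)
    -- stepsize η ≤ 1/L
    (η : ℝ) (hη0 : 0 ≤ η) (hη : η ≤ 1 / L)
    -- the Local GD iterates, initialized at x⁽⁰⁾ = 1
    (X : ℕ → Fin n → ℝ)
    (hX0 : ∀ i, X 0 i = 1)
    (hXrec : ∀ t i, X (t + 1) i =
      if (t + 1) % K = 0 then (n : ℝ)⁻¹ * ∑ j, (X t j - η * g j (X t j))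
      else X t i - η * g i (X t i)) :
    -- x₁⁽ᵗ⁾ ∈ [0,1] for all t
    (∀ t : ℕ, X t ⟨0, hn⟩ ∈ Set.Icc (0 : ℝ) 1) ∧
    -- the round averages are nonincreasing
    (∀ r : ℕ, (n : ℝ)⁻¹ * ∑ i, X ((r + 1) * K) i ≤ (n : ℝ)⁻¹ * ∑ i, X (r * K) i) ∧
    -- the round averages lie in [0,1]
    (∀ r : ℕ, (n : ℝ)⁻¹ * ∑ i, X (r * K) i ∈ Set.Icc (0 : ℝ) 1) ∧
    -- one-round lower bound: x̄⁽⁽ʳ⁺¹⁾ᴷ⁾ ≥ ((n-1)/n) x̄⁽ʳᴷ⁾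
    (∀ r : ℕ, (n : ℝ)⁻¹ * ∑ i, X ((r + 1) * K) i
      ≥ ((n : ℝ) - 1) / n * ((n : ℝ)⁻¹ * ∑ i, X (r * K) i)) := by
  set a : ℝ := 1 - η * L with ha
  have hn0 : (0:ℝ) < n := by exact_mod_cast hn
  have hn1 : (1:ℝ) ≤ n := by exact_mod_cast hn
  have hnne : (n:ℝ) ≠ 0 := ne_of_gt hn0
  have haL : η * L ≤ 1 := by
    calc η * L ≤ (1/L) * L := mul_le_mul_of_nonneg_right hη hL.le
      _ = 1 := by field_simp
  have ha0 : 0 ≤ a := by simp only [ha]; linarith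
  have ha1 : a ≤ 1 := by
    have := mul_nonneg hη0 hL.le
    simp only [ha]; linarith
  set C : ℝ := ((n:ℝ) - 1 + a^K) / n with hC
  have haK0 : 0 ≤ a^K := pow_nonneg ha0 K
  have haK1 : a^K ≤ 1 := pow_le_one₀ ha0 ha1
  have hC0 : 0 ≤ C := div_nonneg (by linarith) hn0.le
  have hC1 : C ≤ 1 := by rw [hC, div_le_one hn0]; linarith
  have hClow : ((n:ℝ) - 1) / n ≤ C := by
    rw [hC, div_le_div_iff₀ hn0 hn0]
    nlinarith [mul_nonneg haK0 hn0.le]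
  -- sum of an if-function over Fin n
  have hsum : ∀ (A B : ℝ),
      (∑ j : Fin n, (if (j:ℕ) = 0 then A else B)) = A + ((n:ℝ) - 1) * B := by
    intro A B
    have h1 : ∀ j : Fin n,
        (if (j:ℕ) = 0 then A else B) = B + (if j = (⟨0, hn⟩ : Fin n) then A - B else 0) := by
      intro j
      by_cases h : (j:ℕ) = 0
      · have : j = (⟨0, hn⟩ : Fin n) := Fin.ext h
        simp [h, this]
      · have : j ≠ (⟨0, hn⟩ : Fin n) := by
          intro hh; apply h; rw [hh]
        simp [h, this]
    rw [Finset.sum_congr rfl (fun j _ => h1 j), Finset.sum_add_distrib,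
      Finset.sum_const, Finset.sum_ite_eq' Finset.univ (⟨0, hn⟩ : Fin n)]
    simp [Finset.card_univ]
    ring
  -- closed form for the iterates
  have key : ∀ t i, X t i = (if (i:ℕ) = 0 then a ^ (t % K) else 1) * C ^ (t / K) := by
    intro t
    induction t with
    | zero =>
      intro i
      simp [hX0, Nat.zero_mod, Nat.zero_div]
    | succ t ih =>
      intro i
      have hstep : ∀ j : Fin n, X t j - η * g j (X t j)
          = if (j:ℕ) = 0 then a ^ (t % K + 1) * C ^ (t / K) else C ^ (t / K) := by
        intro j
        rw [hg, ih]
        by_cases h : (j:ℕ) = 0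
        · simp only [h, if_true, if_pos]
          rw [pow_succ, ha]; ring
        · simp [h]
      have hdm := Nat.div_add_mod t K
      have hslt : t % K < K := Nat.mod_lt _ hK
      rcases eq_or_lt_of_le (Nat.succ_le_of_lt hslt) with hEq | hLt
      · -- end of a round: t % K + 1 = K
        have hEq' : t % K + 1 = K := hEq
        have hms : K * (t / K + 1) = K * (t / K) + K := Nat.mul_succ K (t / K)
        have ht1 : t + 1 = K * (t / K + 1) := by omega
        have hmod : (t + 1) % K = 0 := by rw [ht1]; exact Nat.mul_mod_right _ _
        have hdiv : (t + 1) / K = t / K + 1 := by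
          rw [ht1]; exact Nat.mul_div_cancel_left _ hK
        rw [hXrec, if_pos hmod, hmod, hdiv,
          Finset.sum_congr rfl (fun j _ => hstep j), hsum, hEq']
        have hif : (if (i:ℕ) = 0 then a ^ 0 else (1:ℝ)) = 1 := by
          split <;> simp
        rw [hif, one_mul, pow_succ, hC]
        field_simp
        ring
      · -- middle of a round
        have ht1 : t + 1 = K * (t / K) + (t % K + 1) := by omega
        have hmod : (t + 1) % K = t % K + 1 := by
          rw [ht1, Nat.mul_add_mod, Nat.mod_eq_of_lt hLt]
        have hdiv : (t + 1) / K = t / K := by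
          rw [ht1, Nat.mul_add_div hK, Nat.div_eq_of_lt hLt, Nat.add_zero]
        rw [hXrec, if_neg (by rw [hmod]; exact Nat.succ_ne_zero _), hstep i, hmod, hdiv]
        by_cases h : (i:ℕ) = 0 <;> simp [h]
  -- the round averages
  have avg : ∀ r : ℕ, (n : ℝ)⁻¹ * ∑ i, X (r * K) i = C ^ r := by
    intro r
    have hm : (r * K) % K = 0 := Nat.mul_mod_left r K
    have hd : (r * K) / K = r := Nat.mul_div_cancel r hK
    have : ∀ i : Fin n, X (r * K) i = C ^ r := by
      intro i
      rw [key, hm, hd, pow_zero]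
      by_cases h : (i:ℕ) = 0 <;> simp [h]
    rw [Finset.sum_congr rfl (fun i _ => this i), Finset.sum_const, Finset.card_univ,
      Fintype.card_fin, nsmul_eq_mul, ← mul_assoc, inv_mul_cancel₀ hnne, one_mul]
  refine ⟨?_, ?_, ?_, ?_⟩
  · intro t
    rw [key]
    simp only [Fin.val_mk, if_pos rfl]
    constructor
    · positivity
    · exact mul_le_one₀ (pow_le_one₀ ha0 ha1) (pow_nonneg hC0 _) (pow_le_one₀ hC0 hC1)
  · intro r
    rw [avg, avg]
    calc C ^ (r + 1) = C ^ r * C := pow_succ C r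
      _ ≤ C ^ r * 1 := by
          apply mul_le_mul_of_nonneg_left hC1 (pow_nonneg hC0 _)
      _ = C ^ r := mul_one _
  · intro r
    rw [avg]
    exact ⟨pow_nonneg hC0 _, pow_le_one₀ hC0 hC1⟩
  · intro r
    rw [avg, avg, ge_iff_le, pow_succ]
    calc ((n:ℝ) - 1) / n * C ^ r ≤ C * C ^ r :=
          mul_le_mul_of_nonneg_right hClow (pow_nonneg hC0 _)
      _ = C ^ r * C := mul_comm _ _
end

section
/- Intermediate claim in Proposition 2: in the instance with n = 2 nodes in dimension 1, f_1(x) = (L/2)x², f_2(x) = −(L/4)x², if Local GD is run from x^{(0)} = 1 with stepsize η satisfying 2/(LK) ≤ η ≤ 1/L, then x_1^{(t)} ≥ 0 for all t, x̄^{(rK)} ≥ 1 for every round r (proved by induction, using that within one round x_2 increases to satisfy x_2^{((r+1)K−1/2)} ≥ 2), and consequently x̄^{(t)} ≥ 1/2 for all t ∈ [T]. -/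
open scoped BigOperators

/-- Intermediate claims in Proposition 2: with n = 2 nodes in dimension 1,
f₁(x) = (L/2)x² and f₂(x) = -(L/4)x², if Local GD is run from x⁽⁰⁾ = 1 with stepsize
2/(LK) ≤ η ≤ 1/L, then x₁⁽ᵗ⁾ ≥ 0 for all t, x̄⁽ʳᴷ⁾ ≥ 1 for every round r (within each
round x₂ increases to satisfy x₂⁽⁽ʳ⁺¹⁾ᴷ⁻¹ᐟ²⁾ ≥ 2), and consequently x̄⁽ᵗ⁾ ≥ 1/2 for all
t ∈ [T]. -/
theorem divergence_nonconvex_claims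
    (L : ℝ) (hL : 0 < L)
    (K T : ℕ) (hK : 0 < K)
    -- the two local losses' derivatives: f₁'(x) = Lx, f₂'(x) = -(L/2)x
    (g : Fin 2 → ℝ → ℝ)
    (hg0 : ∀ x, g 0 x = L * x)
    (hg1 : ∀ x, g 1 x = -(L / 2) * x)
    -- stepsize 2/(LK) ≤ η ≤ 1/L
    (η : ℝ) (hη1 : 2 / (L * K) ≤ η) (hη2 : η ≤ 1 / L)
    -- the Local GD iterates, initialized at x⁽⁰⁾ = 1
    (X : ℕ → Fin 2 → ℝ)
    (hX0 : ∀ i, X 0 i = 1)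
    (hXrec : ∀ t i, X (t + 1) i =
      if (t + 1) % K = 0 then (1 / 2) * (X t 0 - η * g 0 (X t 0) + (X t 1 - η * g 1 (X t 1)))
      else X t i - η * g i (X t i)) :
    -- x₁⁽ᵗ⁾ ≥ 0 for all t
    (∀ t : ℕ, 0 ≤ X t 0) ∧
    -- x̄⁽ʳᴷ⁾ ≥ 1 for every round r
    (∀ r : ℕ, 1 ≤ (1 / 2) * (X (r * K) 0 + X (r * K) 1)) ∧
    -- within each round, x₂⁽⁽ʳ⁺¹⁾ᴷ⁻¹ᐟ²⁾ ≥ 2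
    (∀ r : ℕ, 2 ≤ X ((r + 1) * K - 1) 1 - η * g 1 (X ((r + 1) * K - 1) 1)) ∧
    -- consequently x̄⁽ᵗ⁾ ≥ 1/2 for all t ∈ [T]
    (∀ t : ℕ, 1 ≤ t → t ≤ T → 1 / 2 ≤ (1 / 2) * (X t 0 + X t 1)) := by
  have hKR : (0:ℝ) < K := by exact_mod_cast hK
  have hη0 : 0 < η := lt_of_lt_of_le (by positivity) hη1
  have he0 : 0 < η * L := by positivity
  have he1 : η * L ≤ 1 := by
    have := mul_le_mul_of_nonneg_right hη2 hL.le
    rwa [one_div_mul_cancel hL.ne'] at this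
  have hKe : 2 ≤ (K:ℝ) * (η * L) := by
    have := mul_le_mul_of_nonneg_right hη1 (by positivity : (0:ℝ) ≤ L * K)
    rw [div_mul_cancel₀ _ (by positivity : (L:ℝ) * K ≠ 0)] at this
    nlinarith
  set e : ℝ := η * L with he
  -- Bernoulli: (1 + e/2)^K ≥ 1 + K·e/2 ≥ 2
  have hbern : (2:ℝ) ≤ (1 + e/2) ^ K := by
    have h := one_add_mul_le_pow (by nlinarith : (-2:ℝ) ≤ e/2) K
    nlinarith
  have hone : ∀ m : ℕ, (1:ℝ) ≤ (1 + e/2) ^ m := by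
    intro m; exact one_le_pow₀ (by nlinarith)
  -- mod step lemma
  have hmodsucc : ∀ t : ℕ, ((t+1) % K = 0 ∧ t % K = K - 1) ∨
      ((t+1) % K = t % K + 1 ∧ t % K + 1 < K) := by
    intro t
    have hd := Nat.div_add_mod t K
    have hr : t % K < K := Nat.mod_lt _ hK
    rcases eq_or_lt_of_le (Nat.succ_le_of_lt hr) with h | h
    · left
      have ht : t + 1 = K * (t / K + 1) := by
        rw [Nat.mul_add, Nat.mul_one]; omega
      refine ⟨?_, by omega⟩
      rw [ht]; exact Nat.mul_mod_right _ _
    · right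
      have ht : t + 1 = K * (t / K) + (t % K + 1) := by omega
      refine ⟨?_, h⟩
      rw [ht, Nat.mul_add_mod, Nat.mod_eq_of_lt h]
  -- update formulas
  have hup0 : ∀ t, X t 0 - η * g 0 (X t 0) = (1 - e) * X t 0 := by
    intro t; rw [hg0]; ring
  have hup1 : ∀ t, X t 1 - η * g 1 (X t 1) = (1 + e/2) * X t 1 := by
    intro t; rw [hg1]; ring
  -- main invariant
  have key : ∀ t, 0 ≤ X t 0 ∧ (1 + e/2) ^ (t % K) ≤ X t 1 ∧
      (t % K = 0 → 1 ≤ X t 0 ∧ X t 0 = X t 1) := by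
    intro t
    induction t with
    | zero =>
      refine ⟨by rw [hX0]; norm_num, ?_, fun _ => by rw [hX0, hX0]; norm_num⟩
      rw [hX0, Nat.zero_mod, pow_zero]
    | succ t ih =>
      obtain ⟨h0, h1, h2⟩ := ih
      rcases hmodsucc t with ⟨hm0, hmK⟩ | ⟨hm, hlt⟩
      · -- communication step
        have hx1 : (2:ℝ) ≤ (1 + e/2) * X t 1 := by
          have h1' : (1 + e/2) ^ (K - 1) ≤ X t 1 := by rw [← hmK]; exact h1
          have : (1 + e/2) * (1 + e/2) ^ (K - 1) ≤ (1 + e/2) * X t 1 := by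
            apply mul_le_mul_of_nonneg_left h1' (by nlinarith)
          calc (2:ℝ) ≤ (1 + e/2) ^ K := hbern
            _ = (1 + e/2) * (1 + e/2) ^ (K - 1) := by
                rw [← pow_succ']; congr 1; omega
            _ ≤ (1 + e/2) * X t 1 := this
        have hx0 : (0:ℝ) ≤ (1 - e) * X t 0 := mul_nonneg (by linarith) h0
        have hv : ∀ i : Fin 2, X (t+1) i =
            (1/2) * ((1 - e) * X t 0 + (1 + e/2) * X t 1) := by
          intro i; rw [hXrec t i, if_pos hm0, hup0, hup1]
        have hge : (1:ℝ) ≤ (1/2) * ((1 - e) * X t 0 + (1 + e/2) * X t 1) := by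
          linarith
        refine ⟨by rw [hv 0]; linarith, ?_, fun _ => ⟨by rw [hv 0]; linarith, by rw [hv 0, hv 1]⟩⟩
        rw [hv 1, hm0, pow_zero]; linarith
      · -- local step
        have hne : (t+1) % K ≠ 0 := by omega
        have hv0 : X (t+1) 0 = (1 - e) * X t 0 := by
          rw [hXrec t 0, if_neg hne, hup0]
        have hv1 : X (t+1) 1 = (1 + e/2) * X t 1 := by
          rw [hXrec t 1, if_neg hne, hup1]
        refine ⟨by rw [hv0]; exact mul_nonneg (by linarith) h0, ?_, fun h => absurd h hne⟩
        rw [hv1, hm, pow_succ']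
        exact mul_le_mul_of_nonneg_left h1 (by nlinarith)
  refine ⟨fun t => (key t).1, ?_, ?_, ?_⟩
  · intro r
    obtain ⟨hr0, hreq⟩ := (key (r * K)).2.2 (Nat.mul_mod_left r K)
    linarith
  · intro r
    have hrw : (r + 1) * K - 1 = K * r + (K - 1) := by
      have h2 : (r + 1) * K = K * r + K := by ring
      omega
    have hmod : ((r + 1) * K - 1) % K = K - 1 := by
      rw [hrw, Nat.mul_add_mod, Nat.mod_eq_of_lt (by omega)]
    have h1 := (key ((r + 1) * K - 1)).2.1
    rw [hmod] at h1
    rw [hup1]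
    calc (2:ℝ) ≤ (1 + e/2) ^ K := hbern
      _ = (1 + e/2) * (1 + e/2) ^ (K - 1) := by rw [← pow_succ']; congr 1; omega
      _ ≤ (1 + e/2) * X ((r + 1) * K - 1) 1 :=
          mul_le_mul_of_nonneg_left h1 (by nlinarith)
  · intro t _ _
    have h0 := (key t).1
    have h1 := le_trans (hone (t % K)) (key t).2.1
    linarith
end

section
/- Telescoped gradient-sum bound in the nonconvex analysis: under Assumption 3 with stepsize η = 1/(3KLρ), combining the descent inequality e_{t+1} ≤ e_t − (η/3)h_t + (2η/3)L²V_t with the consensus bound V_t ≤ 3η²Kρ∑_{j=τ(t)}^{t−1} h_j yields (1/3)η∑_{t=0}^{T−1} h_t ≤ e_0 + (2/9)η∑_{t=0}^{T−1} h_t, and therefore (1/T)∑_{t=0}^{T−1} h_t ≤ 27KLρ·e_0/T, where e_t = E[f(x̄^{(t)})] − f*, h_t = E‖∇f(x̄^{(t)})‖², V_t = (1/n)∑_i E‖x_i^{(t)} − x̄^{(t)}‖², and τ(t) is the last communication time at or before t. -/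
/-!
Summing the descent inequality over `t < T` telescopes, and summing the consensus bound counts
each `h j` at most `K` times, so `∑ V t ≤ 3η²K²ρ ∑ h t`; for `η = 1/(3KLρ)` the consensus term
then costs at most `(2/9) η ∑ h t`.

The one subtlety is that `e T` is a Bochner integral, equal to `-f*` rather than to a nonnegative
gap when `f ∘ x̄_T` is not integrable. We therefore telescope the positive parts `max (e t) 0`.
Whenever `f ∘ x̄_t` is integrable, `e t ≥ 0` and the bound `‖∇f‖² ≤ 2L (f - f*)` gives
`(η/3) h t ≤ e t`. That bound needs the smoothness of `f` itself, which holds without any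
integrability of the sample gradients: each sample loss is `(-L)`-strongly concave
(`x ↦ F x ξ - L/2 ‖x‖²` is concave), and this survives taking expectations and averages.
-/

open MeasureTheory ProbabilityTheory
open scoped RealInnerProductSpace
open Finset

section InnerProductSpace

variable {E : Type*} [NormedAddCommGroup E] [InnerProductSpace ℝ E]

theorem sq_norm_le_of_le_add_inner_add_sq {φ : E → ℝ} {G x : E} {L m : ℝ} (hL : 0 < L)
    (hbdd : ∀ y, m ≤ φ y) (hφ : ∀ y, φ y ≤ φ x + ⟪G, y - x⟫ + L / 2 * ‖y - x‖ ^ 2) :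
    ‖G‖ ^ 2 ≤ 2 * L * (φ x - m) := by
  have h := (hbdd _).trans (hφ (x - L⁻¹ • G))
  rw [sub_sub_cancel_left, inner_neg_right, real_inner_smul_right, real_inner_self_eq_norm_sq,
    norm_neg, norm_smul, Real.norm_of_nonneg (inv_nonneg.2 hL.le)] at h
  field_simp at h
  nlinarith [sq_nonneg ‖G‖]

variable [CompleteSpace E]

theorem HasGradientAt.hasDerivAt_add_smul {φ : E → ℝ} {G x v : E} {t : ℝ}
    (hG : HasGradientAt φ G (x + t • v)) :
    HasDerivAt (fun s : ℝ => φ (x + s • v)) ⟪G, v⟫ t := by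
  have hline : HasDerivAt (fun s : ℝ => x + s • v) v t := by
    simpa using ((hasDerivAt_id t).smul_const v).const_add x
  exact hG.hasFDerivAt.comp_hasDerivAt t hline

theorem strongConcaveOn_of_lipschitz_gradient {φ : E → ℝ} {G : E → E} {L : ℝ}
    (hG : ∀ x, HasGradientAt φ (G x) x) (hLip : ∀ x y, ‖G x - G y‖ ≤ L * ‖x - y‖) :
    StrongConcaveOn Set.univ (-L) φ := by
  refine ⟨convex_univ, fun x _ y _ a b ha hb hab => ?_⟩
  set v := y - x
  set k : ℝ → ℝ := fun t => φ (x + t • v) - L / 2 * t ^ 2 * ‖v‖ ^ 2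
  have hk : ∀ t, HasDerivAt k (⟪G (x + t • v), v⟫ - L * t * ‖v‖ ^ 2) t := fun t =>
    (((hG _).hasDerivAt_add_smul).sub
      (((hasDerivAt_pow 2 t).const_mul (L / 2)).mul_const (‖v‖ ^ 2))).congr_deriv (by ring)
  have hconc : ConcaveOn ℝ Set.univ k := by
    refine Antitone.concaveOn_univ_of_deriv (fun t => (hk t).differentiableAt) ?_
    rw [show deriv k = _ from funext fun t => (hk t).deriv]
    intro s t hst
    have hinner : ⟪G (x + t • v) - G (x + s • v), v⟫ ≤ L * (t - s) * ‖v‖ ^ 2 :=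
      calc ⟪G (x + t • v) - G (x + s • v), v⟫
          ≤ ‖G (x + t • v) - G (x + s • v)‖ * ‖v‖ := real_inner_le_norm _ _
        _ ≤ L * ‖(t - s) • v‖ * ‖v‖ := by
          gcongr
          simpa [sub_smul] using hLip (x + t • v) (x + s • v)
        _ = L * (t - s) * ‖v‖ ^ 2 := by
          rw [norm_smul, Real.norm_of_nonneg (sub_nonneg.2 hst)]; ring
    rw [inner_sub_left] at hinner
    linarith
  obtain rfl : a = 1 - b := by linarith
  have := hconc.2 (Set.mem_univ 0) (Set.mem_univ 1) ha hb hab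
  have hpt : x + b • v = (1 - b) • x + b • y := by simp only [v]; module
  simp only [k, smul_eq_mul, mul_zero, zero_add, mul_one, zero_smul, add_zero, one_smul,
    hpt, v, add_sub_cancel] at this
  simp only [smul_eq_mul, norm_sub_rev x y]
  nlinarith [sq_nonneg ‖y - x‖]

theorem StrongConcaveOn.le_add_inner_add_sq {φ : E → ℝ} {G x : E} {L : ℝ}
    (hφ : StrongConcaveOn Set.univ (-L) φ) (hG : HasGradientAt φ G x) (y : E) :
    φ y ≤ φ x + ⟪G, y - x⟫ + L / 2 * ‖y - x‖ ^ 2 := by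
  obtain ⟨v, rfl⟩ : ∃ v, y = x + v := ⟨y - x, by abel⟩
  have hconc : ConcaveOn ℝ Set.univ fun t : ℝ => φ (x + t • v) - L / 2 * ‖x + t • v‖ ^ 2 := by
    refine ((strongConcaveOn_iff_convex.1 hφ).comp_affineMap
      (AffineMap.lineMap x (x + v))).congr fun t _ => ?_
    simp [AffineMap.lineMap_apply_module', add_comm, neg_div, sub_eq_add_neg]
  have hline : HasDerivAt (fun t : ℝ => x + t • v) v 0 := by
    simpa using ((hasDerivAt_id (0 : ℝ)).smul_const v).const_add x
  have hG0 : HasGradientAt φ G (x + (0 : ℝ) • v) := by rwa [zero_smul, add_zero]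
  have hderiv := hG0.hasDerivAt_add_smul.sub (hline.norm_sq.const_mul (L / 2))
  have := hconc.slope_le_of_hasDerivAt (Set.mem_univ 0) (Set.mem_univ 1) one_pos hderiv
  simp only [slope_def_field, one_smul, zero_smul, add_zero, sub_zero, div_one] at this
  rw [norm_add_sq_real] at this
  simp only [add_sub_cancel_left]
  linarith

end InnerProductSpace

section NormedSpace

variable {E : Type*} [NormedAddCommGroup E] [NormedSpace ℝ E] {s : Set E} {ψ : ℝ → ℝ}

theorem UniformConcaveOn.integral {S : Type*} [MeasurableSpace S] {μ : Measure S}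
    [IsProbabilityMeasure μ] {F : E → S → ℝ} (hF : ∀ ξ, UniformConcaveOn s ψ (F · ξ))
    (hint : ∀ x ∈ s, Integrable (F x) μ) :
    UniformConcaveOn s ψ fun x => ∫ ξ, F x ξ ∂μ := by
  obtain ⟨ξ₀⟩ := nonempty_of_isProbabilityMeasure μ
  refine ⟨(hF ξ₀).1, fun x hx y hy a b ha hb hab => ?_⟩
  have hFx : Integrable (fun ξ => a • F x ξ) μ := (hint x hx).smul a
  have hFy : Integrable (fun ξ => b • F y ξ) μ := (hint y hy).smul b
  have hFxy : Integrable (fun ξ => a • F x ξ + b • F y ξ) μ := hFx.add hFy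
  calc a • ∫ ξ, F x ξ ∂μ + b • ∫ ξ, F y ξ ∂μ + a * b * ψ ‖x - y‖
      = ∫ ξ, (a • F x ξ + b • F y ξ + a * b * ψ ‖x - y‖) ∂μ := by
        rw [integral_add hFxy (integrable_const _), integral_add hFx hFy,
          integral_smul, integral_smul, integral_const, probReal_univ, one_smul]
    _ ≤ ∫ ξ, F (a • x + b • y) ξ ∂μ :=
        integral_mono (hFxy.add (integrable_const _))
          (hint _ ((hF ξ₀).1 hx hy ha hb hab)) fun ξ => (hF ξ).2 hx hy ha hb hab

theorem UniformConcaveOn.sum_mul {ι : Type*} [Fintype ι] {w : ι → ℝ} (hw₀ : ∀ i, 0 ≤ w i)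
    (hw₁ : ∑ i, w i = 1) {f : ι → E → ℝ} (hf : ∀ i, UniformConcaveOn s ψ (f i)) :
    UniformConcaveOn s ψ fun x => ∑ i, w i * f i x := by
  obtain ⟨i₀, -, -⟩ := exists_ne_zero_of_sum_ne_zero (hw₁ ▸ one_ne_zero)
  refine ⟨(hf i₀).1, fun x hx y hy a b ha hb hab => ?_⟩
  calc a • ∑ i, w i * f i x + b • ∑ i, w i * f i y + a * b * ψ ‖x - y‖
      = ∑ i, w i * (a • f i x + b • f i y + a * b * ψ ‖x - y‖) := by
        simp only [smul_eq_mul, mul_sum, mul_add, sum_add_distrib,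
          ← Finset.sum_mul, hw₁]
        congr 1
        · congr 1 <;> exact sum_congr rfl fun i _ => by ring
        · ring
    _ ≤ ∑ i, w i * f i (a • x + b • y) :=
        sum_le_sum fun i _ => mul_le_mul_of_nonneg_left ((hf i).2 hx hy ha hb hab) (hw₀ i)

end NormedSpace

theorem le_integral_and_integral_le_or_integral_eq_zero {Ω : Type*} [MeasurableSpace Ω]
    {P : Measure Ω} [IsProbabilityMeasure P] {X Z : Ω → ℝ} {m C : ℝ}
    (hX : ∀ ω, m ≤ X ω) (hZ₀ : ∀ ω, 0 ≤ Z ω) (hZ : ∀ ω, Z ω ≤ C * (X ω - m)) :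
    (m ≤ ∫ ω, X ω ∂P ∧ ∫ ω, Z ω ∂P ≤ C * (∫ ω, X ω ∂P - m)) ∨ ∫ ω, X ω ∂P = 0 := by
  by_cases hint : Integrable X P
  · left
    have hbound : Integrable (fun ω => C * (X ω - m)) P := (hint.sub (integrable_const m)).const_mul C
    constructor
    · simpa using integral_mono (integrable_const m) hint hX
    · calc ∫ ω, Z ω ∂P ≤ ∫ ω, C * (X ω - m) ∂P :=
            integral_mono_of_nonneg (.of_forall hZ₀) hbound (.of_forall hZ)
        _ = C * (∫ ω, X ω ∂P - m) := by
            rw [integral_const_mul, integral_sub hint (integrable_const m)]; simp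
  · exact .inr (integral_undef hint)

theorem sum_range_sub_le_of_descent {e a b : ℕ → ℝ} {c : ℝ}
    (hdesc : ∀ t, e (t + 1) ≤ e t - a t + b t) (hb : ∀ t, 0 ≤ b t)
    (he : ∀ t, (0 ≤ e t ∧ a t ≤ e t) ∨ e t = c) (he₀ : 0 ≤ e 0) (T : ℕ) :
    ∑ t ∈ range T, (a t - b t) ≤ e 0 := by
  have hstep : ∀ t, a t - b t ≤ max (e t) 0 - max (e (t + 1)) 0 := by
    intro t
    have hdesc_t := hdesc t
    rcases le_or_gt 0 (e (t + 1)) with hpos | hneg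
    · rw [max_eq_left hpos]
      linarith [le_max_left (e t) 0]
    · rw [max_eq_right hneg.le, sub_zero]
      have hjunk : e (t + 1) = c := (he (t + 1)).resolve_left fun h => hneg.not_ge h.1
      rcases he t with ⟨-, hle⟩ | hjunk'
      · linarith [le_max_left (e t) 0, hb t]
      · linarith [le_max_right (e t) 0]
  calc ∑ t ∈ range T, (a t - b t) ≤ ∑ t ∈ range T, (max (e t) 0 - max (e (t + 1)) 0) :=
        sum_le_sum fun t _ => hstep t
    _ = max (e 0) 0 - max (e T) 0 := sum_range_sub' _ T
    _ ≤ e 0 := by rw [max_eq_left he₀]; linarith [le_max_right (e T) 0]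

theorem sum_sum_Ico_le_mul_sum {h : ℕ → ℝ} (hh : ∀ t, 0 ≤ h t) {τ : ℕ → ℕ} {K : ℕ}
    (hτ : ∀ t, t < τ t + K) (T : ℕ) :
    ∑ t ∈ range T, ∑ j ∈ Ico (τ t) t, h j ≤ K * ∑ j ∈ range T, h j := by
  rw [sum_comm' (t' := range T) (s' := fun j => {t ∈ range T | j ∈ Ico (τ t) t})
    (fun t j => by simp only [mem_filter, mem_range, mem_Ico]; omega), mul_sum]
  refine sum_le_sum fun j _ => ?_
  rw [sum_const, nsmul_eq_mul]
  gcongr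
  · exact hh j
  calc #{t ∈ range T | j ∈ Ico (τ t) t} ≤ #(Ico j (j + K)) := card_le_card fun t ht => by
        simp only [mem_filter, mem_range, mem_Ico] at ht ⊢
        have := hτ t; omega
    _ = K := by simp

theorem sum_le_mul_sum_of_le_sum_Ico {V h : ℕ → ℝ} {c : ℝ} (hc : 0 ≤ c) (hh : ∀ t, 0 ≤ h t)
    {τ : ℕ → ℕ} {K : ℕ} (hτ : ∀ t, t < τ t + K) (hV : ∀ t, V t ≤ c * ∑ j ∈ Ico (τ t) t, h j)
    (T : ℕ) : ∑ t ∈ range T, V t ≤ c * (K * ∑ t ∈ range T, h t) :=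
  calc ∑ t ∈ range T, V t ≤ ∑ t ∈ range T, c * ∑ j ∈ Ico (τ t) t, h j := sum_le_sum fun t _ => hV t
    _ = c * ∑ t ∈ range T, ∑ j ∈ Ico (τ t) t, h j := (mul_sum _ _ _).symm
    _ ≤ c * (K * ∑ t ∈ range T, h t) := by gcongr; exact sum_sum_Ico_le_mul_sum hh hτ T

theorem telescoped_bounds_of_stepsize {K T : ℕ} {L ρ η e₀ S W : ℝ} (hK : 0 < K) (hL : 0 < L)
    (hρ : 1 ≤ ρ) (hη : η = 1 / (3 * K * L * ρ)) (hS₀ : 0 ≤ S)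
    (htel : η / 3 * S - 2 * η / 3 * L ^ 2 * W ≤ e₀) (hW : W ≤ 3 * η ^ 2 * K * ρ * (K * S)) :
    1 / 3 * η * S ≤ e₀ + 2 / 9 * η * S ∧ 1 / T * S ≤ 27 * K * L * ρ * e₀ / T := by
  have hη₀ : 0 < η := by rw [hη]; positivity
  have hcoef : 2 * η / 3 * L ^ 2 * (3 * η ^ 2 * K * ρ * K) ≤ 2 / 9 * η := by
    rw [hη]
    field_simp
    nlinarith
  have hfirst : 1 / 3 * η * S ≤ e₀ + 2 / 9 * η * S := by
    nlinarith [mul_le_mul_of_nonneg_left hW (by positivity : 0 ≤ 2 * η / 3 * L ^ 2),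
      mul_le_mul_of_nonneg_right hcoef hS₀]
  refine ⟨hfirst, ?_⟩
  have hkey : 27 * K * L * ρ * η = 9 := by rw [hη]; field_simp; ring
  have hS : S ≤ 27 * K * L * ρ * e₀ := by
    nlinarith [mul_le_mul_of_nonneg_left hfirst (by positivity : (0 : ℝ) ≤ 27 * K * L * ρ)]
  rw [one_div_mul_eq_div]
  exact div_le_div_of_nonneg_right hS (Nat.cast_nonneg T)

theorem local_sgd_nonconvex_telescoped_general
    {d n : ℕ} (hn : 0 < n)
    {Ω S : Type*} [MeasurableSpace Ω] [MeasurableSpace S]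
    -- underlying probability space
    (P : Measure Ω) [IsProbabilityMeasure P]
    -- local sample distributions
    (D : Fin n → Measure S) (hD : ∀ i, IsProbabilityMeasure (D i))
    -- sample loss functions and their (stochastic) gradients
    (F : Fin n → EuclideanSpace ℝ (Fin d) → S → ℝ)
    (g : Fin n → EuclideanSpace ℝ (Fin d) → S → EuclideanSpace ℝ (Fin d))
    (L : ℝ) (hL : 0 < L)
    -- g i x s is the gradient of the sample loss F i · s at x
    (hgrad : ∀ i s x, HasGradientAt (fun y => F i y s) (g i x s) x)
    -- each sample loss is L-smooth
    (hsmooth : ∀ i s x y, ‖g i x s - g i y s‖ ≤ L * ‖x - y‖)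
    -- integrability of the sample losses
    (hFint : ∀ i x, Integrable (fun s => F i x s) (D i))
    -- local objectives fᵢ(x) = E_{ξᵢ ∼ Dᵢ}[F i x ξᵢ] and global objective f
    (fi : Fin n → EuclideanSpace ℝ (Fin d) → ℝ)
    (hfi : ∀ i x, fi i x = ∫ s, F i x s ∂(D i))
    (f : EuclideanSpace ℝ (Fin d) → ℝ)
    (hf : ∀ x, f x = (n : ℝ)⁻¹ * ∑ i, fi i x)
    -- gradient of the global objective
    (gradf : EuclideanSpace ℝ (Fin d) → EuclideanSpace ℝ (Fin d))
    (hgradf : ∀ x, HasGradientAt f (gradf x) x)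
    -- f is bounded below by f*
    (fstar : ℝ) (hbdd : ∀ x, fstar ≤ f x)
    -- Assumption 3: strong growth condition with constant ρ ≥ 1
    (ρ : ℝ) (hρ : 1 ≤ ρ)
    -- Local SGD: K ≥ 2 local steps per round, R rounds, T = RK total iterations
    (K T : ℕ) (hK : 0 < K)
    -- stepsize η = 1/(3KLρ)
    (η : ℝ) (hη : η = 1 / (3 * K * L * ρ))
    -- the Local SGD iterates: common initialization, local steps, averaging at times in I
    (X : ℕ → Fin n → Ω → EuclideanSpace ℝ (Fin d))
    (x0 : EuclideanSpace ℝ (Fin d))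
    (hX0 : ∀ i ω, X 0 i ω = x0)
    -- the average iterate, expected optimality gap, expected gradient norm and
    -- expected consensus error
    (xbar : ℕ → Ω → EuclideanSpace ℝ (Fin d))
    (hxbar : ∀ t ω, xbar t ω = (n : ℝ)⁻¹ • ∑ i, X t i ω)
    (e h V : ℕ → ℝ)
    (he : ∀ t, e t = (∫ ω, f (xbar t ω) ∂P) - fstar)
    (hh : ∀ t, h t = ∫ ω, ‖gradf (xbar t ω)‖ ^ 2 ∂P)
    (hV : ∀ t, V t = (n : ℝ)⁻¹ * ∑ i, ∫ ω, ‖X t i ω - xbar t ω‖ ^ 2 ∂P)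
    -- τ(t): the last communication time at or before t
    (τ : ℕ → ℕ) (hτ : ∀ t, τ t = K * (t / K))
    -- the descent inequality (Lemma 5)
    (hdescent : ∀ t : ℕ, e (t + 1) ≤ e t - η / 3 * h t + 2 * η / 3 * L ^ 2 * V t)
    -- the consensus bound (Lemma 6)
    (hcons : ∀ t : ℕ, V t ≤ 3 * η ^ 2 * K * ρ * ∑ j ∈ Finset.Ico (τ t) t, h j) :
    1 / 3 * η * ∑ t ∈ Finset.range T, h t
        ≤ e 0 + 2 / 9 * η * ∑ t ∈ Finset.range T, h t ∧
      1 / T * ∑ t ∈ Finset.range T, h t ≤ 27 * K * L * ρ * e 0 / T := by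
  have hK' : (1 : ℝ) ≤ K := by exact_mod_cast hK
  have hη₀ : 0 < η := by rw [hη]; positivity
  have hηL : η * L ≤ 1 / 3 := by
    rw [hη, div_mul_eq_mul_div, one_mul, div_le_div_iff₀ (by positivity) (by norm_num)]
    nlinarith [mul_le_mul hK' hρ zero_le_one (by positivity)]
  have hf_sc : StrongConcaveOn Set.univ (-L) f := by
    have hfi_sc : ∀ i, StrongConcaveOn Set.univ (-L) (fi i) := fun i => by
      have := hD i
      rw [funext (hfi i)]
      exact UniformConcaveOn.integral
        (fun s => strongConcaveOn_of_lipschitz_gradient (hgrad i s) (hsmooth i s))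
        fun x _ => hFint i x
    rw [funext fun x => (hf x).trans (mul_sum _ _ _)]
    exact UniformConcaveOn.sum_mul (fun _ => by positivity) (by simp [hn.ne']) hfi_sc
  have hPL : ∀ x, ‖gradf x‖ ^ 2 ≤ 2 * L * (f x - fstar) := fun x =>
    sq_norm_le_of_le_add_inner_add_sq hL hbdd (hf_sc.le_add_inner_add_sq (hgradf x))
  have he_cases : ∀ t, (0 ≤ e t ∧ η / 3 * h t ≤ e t) ∨ e t = -fstar := fun t => by
    rw [he, hh]
    rcases le_integral_and_integral_le_or_integral_eq_zero (P := P) (fun ω => hbdd (xbar t ω))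
      (fun ω => sq_nonneg ‖gradf (xbar t ω)‖) (fun ω => hPL (xbar t ω)) with ⟨hm, hZ⟩ | h0
    · refine .inl ⟨by linarith, ?_⟩
      nlinarith [mul_le_mul_of_nonneg_left hZ hη₀.le,
        mul_le_mul_of_nonneg_right hηL (sub_nonneg.2 hm)]
    · exact .inr (by rw [h0, zero_sub])
  have he₀ : 0 ≤ e 0 := by
    have hxbar₀ : ∀ ω, xbar 0 ω = x0 := fun ω => by
      simp only [hxbar, hX0, sum_const, card_univ, Fintype.card_fin]
      rw [← Nat.cast_smul_eq_nsmul ℝ, smul_smul, inv_mul_cancel₀ (by positivity), one_smul]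
    simp [he, hxbar₀, hbdd x0]
  have hh₀ : ∀ t, 0 ≤ h t := fun t => (hh t).symm ▸ integral_nonneg fun _ => sq_nonneg _
  have hV₀ : ∀ t, 0 ≤ V t := fun t => (hV t).symm ▸ by positivity
  have hVsum := sum_le_mul_sum_of_le_sum_Ico (by positivity) hh₀
    (fun t => by rw [hτ, mul_comm]; exact Nat.lt_div_mul_add hK) hcons T
  have htel := sum_range_sub_le_of_descent (a := fun t => η / 3 * h t)
    (b := fun t => 2 * η / 3 * L ^ 2 * V t) hdescent (fun t => by have := hV₀ t; positivity)
    he_cases he₀ T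
  rw [sum_sub_distrib, ← mul_sum, ← mul_sum] at htel
  exact telescoped_bounds_of_stepsize hK hL hρ hη (sum_nonneg fun t _ => hh₀ t) htel hVsum

/-- Telescoped gradient-sum bound: under the strong growth condition (Assumption 3) with
stepsize η = 1/(3KLρ), combining the descent inequality
`e_{t+1} ≤ e_t - (η/3) h_t + (2η/3) L² V_t` with the consensus bound
`V_t ≤ 3η²Kρ ∑_{j=τ(t)}^{t-1} h_j` yields
`(1/3) η ∑_{t<T} h_t ≤ e₀ + (2/9) η ∑_{t<T} h_t`, and therefore
`(1/T) ∑_{t<T} h_t ≤ 27KLρ e₀ / T`. -/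
theorem local_sgd_nonconvex_telescoped
    {d n : ℕ} (hn : 0 < n)
    {Ω S : Type*} [MeasurableSpace Ω] [MeasurableSpace S]
    -- underlying probability space
    (P : Measure Ω) [IsProbabilityMeasure P]
    -- local sample distributions
    (D : Fin n → Measure S) (hD : ∀ i, IsProbabilityMeasure (D i))
    -- sample loss functions and their (stochastic) gradients
    (F : Fin n → EuclideanSpace ℝ (Fin d) → S → ℝ)
    (g : Fin n → EuclideanSpace ℝ (Fin d) → S → EuclideanSpace ℝ (Fin d))
    (L : ℝ) (hL : 0 < L)
    -- g i x s is the gradient of the sample loss F i · s at x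
    (hgrad : ∀ i s x, HasGradientAt (fun y => F i y s) (g i x s) x)
    (hgmeas : ∀ i, Measurable (fun p : EuclideanSpace ℝ (Fin d) × S => g i p.1 p.2))
    -- each sample loss is L-smooth
    (hsmooth : ∀ i s x y, ‖g i x s - g i y s‖ ≤ L * ‖x - y‖)
    -- integrability of the sample losses
    (hFint : ∀ i x, Integrable (fun s => F i x s) (D i))
    -- local objectives fᵢ(x) = E_{ξᵢ ∼ Dᵢ}[F i x ξᵢ] and global objective f
    (fi : Fin n → EuclideanSpace ℝ (Fin d) → ℝ)
    (hfi : ∀ i x, fi i x = ∫ s, F i x s ∂(D i))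
    (f : EuclideanSpace ℝ (Fin d) → ℝ)
    (hf : ∀ x, f x = (n : ℝ)⁻¹ * ∑ i, fi i x)
    -- gradient of the global objective
    (gradf : EuclideanSpace ℝ (Fin d) → EuclideanSpace ℝ (Fin d))
    (hgradf : ∀ x, HasGradientAt f (gradf x) x)
    -- f is bounded below by f*
    (fstar : ℝ) (hbdd : ∀ x, fstar ≤ f x)
    -- Assumption 3: strong growth condition with constant ρ ≥ 1
    (ρ : ℝ) (hρ : 1 ≤ ρ)
    (hSGC : ∀ i x, ∫ s, ‖g i x s‖ ^ 2 ∂(D i) ≤ ρ * ‖gradf x‖ ^ 2)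
    -- Local SGD: K ≥ 2 local steps per round, R rounds, T = RK total iterations
    (K R T : ℕ) (hK : 0 < K) (hR : 0 < R) (hT : T = R * K)
    -- stepsize η = 1/(3KLρ)
    (η : ℝ) (hη : η = 1 / (3 * K * L * ρ))
    -- i.i.d. samples ξᵢ⁽ᵗ⁾ ∼ Dᵢ, independent across nodes and iterations
    (ξ : Fin n → ℕ → Ω → S)
    (hξmeas : ∀ i t, Measurable (ξ i t))
    (hindep : iIndepFun (fun p : Fin n × ℕ => ξ p.1 p.2) P)
    (hdist : ∀ i t, P.map (ξ i t) = D i)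
    -- the Local SGD iterates: common initialization, local steps, averaging at times in I
    (X : ℕ → Fin n → Ω → EuclideanSpace ℝ (Fin d))
    (x0 : EuclideanSpace ℝ (Fin d))
    (hX0 : ∀ i ω, X 0 i ω = x0)
    (hXrec : ∀ t i ω,
      X (t + 1) i ω =
        if (t + 1) % K = 0 then
          (n : ℝ)⁻¹ • ∑ j, (X t j ω - η • g j (X t j ω) (ξ j t ω))
        else X t i ω - η • g i (X t i ω) (ξ i t ω))
    -- the average iterate, expected optimality gap, expected gradient norm and
    -- expected consensus error
    (xbar : ℕ → Ω → EuclideanSpace ℝ (Fin d))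
    (hxbar : ∀ t ω, xbar t ω = (n : ℝ)⁻¹ • ∑ i, X t i ω)
    (e h V : ℕ → ℝ)
    (he : ∀ t, e t = (∫ ω, f (xbar t ω) ∂P) - fstar)
    (hh : ∀ t, h t = ∫ ω, ‖gradf (xbar t ω)‖ ^ 2 ∂P)
    (hV : ∀ t, V t = (n : ℝ)⁻¹ * ∑ i, ∫ ω, ‖X t i ω - xbar t ω‖ ^ 2 ∂P)
    -- τ(t): the last communication time at or before t
    (τ : ℕ → ℕ) (hτ : ∀ t, τ t = K * (t / K))
    -- the descent inequality (Lemma 5)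
    (hdescent : ∀ t : ℕ, e (t + 1) ≤ e t - η / 3 * h t + 2 * η / 3 * L ^ 2 * V t)
    -- the consensus bound (Lemma 6)
    (hcons : ∀ t : ℕ, V t ≤ 3 * η ^ 2 * K * ρ * ∑ j ∈ Finset.Ico (τ t) t, h j) :
    1 / 3 * η * ∑ t ∈ Finset.range T, h t
        ≤ e 0 + 2 / 9 * η * ∑ t ∈ Finset.range T, h t ∧
      1 / T * ∑ t ∈ Finset.range T, h t ≤ 27 * K * L * ρ * e 0 / T :=
  local_sgd_nonconvex_telescoped_general hn P D hD F g L hL hgrad hsmooth hFint fi hfi f hf gradf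
    hgradf fstar hbdd ρ hρ K T hK η hη X x0 hX0 xbar hxbar e h V he hh hV τ hτ hdescent hcons
end

section
/- Refutation of the inequality M_n ≥ min_i T_i/L_i² claimed in Zhang et al.: there exist positive integers T_i ≥ 2, positive constants L_i, α_i = 1/L_i², and nonnegative sequences h_{i,n}(t) with h_{i,n}(0) = 1 and h_{i,n}(t) = 0 for t = 1, ..., T_i − 1, such that M_n = min_i α_i ∑_{t=0}^{T_i−1} h_{i,n}(t) ≤ 1/L_i² < min_i T_i/L_i²; hence the inequality M_n ≥ min_i T_i/L_i² fails in general. -/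
open scoped BigOperators

/-- Refutation of the inequality `Mₙ ≥ minᵢ Tᵢ/Lᵢ²` claimed in Zhang et al.: there exist
numbers of local steps Tᵢ ≥ 2, positive constants Lᵢ with αᵢ = 1/Lᵢ², and nonnegative
sequences h_{i,n}(t) with h_{i,n}(0) = 1 and h_{i,n}(t) = 0 for t = 1, ..., Tᵢ - 1, such
that Mₙ = minᵢ αᵢ ∑_{t=0}^{Tᵢ-1} h_{i,n}(t) satisfies Mₙ ≤ 1/Lᵢ² for some i and
Mₙ < minᵢ Tᵢ/Lᵢ²; hence the claimed inequality fails in general. -/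
theorem refutation_zhang_inequality :
    ∃ (m : ℕ) (Ti : Fin m → ℕ) (Li : Fin m → ℝ) (h : Fin m → ℕ → ℝ),
      0 < m ∧
      (∀ i, 2 ≤ Ti i) ∧
      (∀ i, 0 < Li i) ∧
      (∀ i t, 0 ≤ h i t) ∧
      (∀ i, h i 0 = 1) ∧
      (∀ i t, 1 ≤ t → t ≤ Ti i - 1 → h i t = 0) ∧
      (∃ i : Fin m,
        (⨅ j : Fin m, 1 / (Li j) ^ 2 * ∑ t ∈ Finset.range (Ti j), h j t)
          ≤ 1 / (Li i) ^ 2) ∧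
      (⨅ j : Fin m, 1 / (Li j) ^ 2 * ∑ t ∈ Finset.range (Ti j), h j t)
        < ⨅ j : Fin m, (Ti j : ℝ) / (Li j) ^ 2 := by
  refine ⟨1, fun _ => 2, fun _ => 1, fun _ t => if t = 0 then 1 else 0,
    one_pos, fun _ => le_refl 2, fun _ => one_pos, ?_, fun _ => rfl, ?_, ?_, ?_⟩
  · intro i t; dsimp only; split <;> norm_num
  · intro i t ht _; simp [Nat.one_le_iff_ne_zero.mp ht]
  · exact ⟨0, by rw [ciInf_unique]; norm_num⟩
  · rw [ciInf_unique, ciInf_unique]; norm_num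
end
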